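/- arXiv:1106.5473 — 7 statements merged into one kernel-verified Lean document; each statement's English description precedes it below -/
import Mathlib

section
/- Let n be an odd positive integer and α any N-dimensional unitary representation of ℤ/nℤ. With γ_m^α := ⟨χ_{E_{m+1}}, χ_α⟩, one has Σ_{m=0}^{n-1} γ_m^α = N(n+3)/2. -/
open Finset

/-- The character `χ_t` of `ℤ/nℤ` sending the generator to `exp(2πit/n)`. -/
noncomputable def chiZ (n : ℕ) (t : ZMod n) : ZMod n → ℂ :=
  fun g => Complex.exp (2 * Real.pi * Complex.I * t.val * g.val / n)

/-- The character of the restriction to `ℤ/nℤ ⊂ SU(2)` of the `(k+1)`-dimensional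
irreducible representation `E_k` of `SU(2)`: `χ_{E_k} = Σ_{j=0}^{k} χ_{[k-2j]}`. -/
noncomputable def chiE (n : ℕ) (k : ℕ) : ZMod n → ℂ :=
  fun g => ∑ j ∈ Finset.range (k + 1), chiZ n ((k : ZMod n) - 2 * (j : ZMod n)) g

/-- The character inner product `(1/n) Σ_g χ(g) conj(ψ(g))` on `ℤ/nℤ`. -/
noncomputable def pairZ (n : ℕ) [NeZero n] (χ ψ : ZMod n → ℂ) : ℂ :=
  (n : ℂ)⁻¹ * ∑ g : ZMod n, χ g * (starRingEnd ℂ) (ψ g)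

/-- The character of a finite-dimensional representation `α` of `ℤ/nℤ`. -/
noncomputable def chiRep {n N : ℕ}
    (α : Representation ℂ (Multiplicative (ZMod n)) (Fin N → ℂ)) : ZMod n → ℂ :=
  fun g => LinearMap.trace ℂ (Fin N → ℂ) (α (Multiplicative.ofAdd g))

lemma zpow_zmod_val (n : ℕ) [NeZero n] (z : ℂ) (hz : z ≠ 0) (h1 : z ^ (n:ℤ) = 1) (a : ℤ) :
    z ^ (((a : ZMod n)).val : ℤ) = z ^ a := by
  obtain ⟨k, hk⟩ : (n:ℤ) ∣ (a - ((a : ZMod n).val : ℤ)) := by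
    have := (ZMod.intCast_zmod_eq_zero_iff_dvd (a - ((a : ZMod n).val : ℤ)) n).mp
    apply this
    push_cast
    simp [ZMod.intCast_cast, ZMod.natCast_val]
  have h : a = (n:ℤ) * k + ((a : ZMod n).val : ℤ) := by linarith
  conv_rhs => rw [h]
  rw [zpow_add₀ hz, zpow_mul, h1, one_zpow, one_mul]

lemma sum_chiE_ne_zero (n : ℕ) [NeZero n] (hn : Odd n) (g : ZMod n) (hg : g ≠ 0) :
    ∑ m ∈ Finset.range n, chiE n (m + 1) g = 0 := by
  have hn0 : (n:ℂ) ≠ 0 := Nat.cast_ne_zero.mpr (NeZero.ne n)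
  have hv0 : 0 < g.val := by
    rcases Nat.eq_zero_or_pos g.val with h | h
    · exact absurd ((ZMod.val_eq_zero g).mp h) hg
    · exact h
  have hvn : g.val < n := ZMod.val_lt g
  set z : ℂ := Complex.exp (2 * Real.pi * Complex.I * g.val / n) with hzdef
  have hz0 : z ≠ 0 := Complex.exp_ne_zero _
  have hznn : z ^ n = 1 := by
    rw [hzdef, ← Complex.exp_nat_mul]
    have harg : (n:ℂ) * (2 * Real.pi * Complex.I * g.val / n) = (g.val : ℤ) * (2 * Real.pi * Complex.I) := by
      push_cast; field_simp
    rw [harg, Complex.exp_int_mul_two_pi_mul_I]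
  have hzn : z ^ (n:ℤ) = 1 := by rw [zpow_natCast]; exact hznn
  have h2pi : (2:ℂ) * Real.pi * Complex.I ≠ 0 := by
    simp [Real.pi_ne_zero, Complex.I_ne_zero]
  have hz1 : z ≠ 1 := by
    intro h
    rw [hzdef, Complex.exp_eq_one_iff] at h
    obtain ⟨k, hk⟩ := h
    rw [div_eq_iff hn0] at hk
    have h3 : (2 * Real.pi * Complex.I) * (g.val : ℂ) = (2 * Real.pi * Complex.I) * ((k : ℂ) * n) := by
      linear_combination hk
    have h4 : (g.val : ℂ) = (k : ℂ) * n := mul_left_cancel₀ h2pi h3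
    have h5 : (g.val : ℤ) = k * n := by exact_mod_cast h4
    have h6 : (n:ℤ) ∣ (g.val : ℤ) := ⟨k, by linarith⟩
    have h7 : n ∣ g.val := by exact_mod_cast h6
    exact absurd (Nat.le_of_dvd hv0 h7) (not_le.mpr hvn)
  obtain ⟨k, hk⟩ := hn
  have hz2 : z ^ (2:ℤ) ≠ 1 := by
    intro h
    apply hz1
    have h1 : (1:ℤ) = (n:ℤ) - 2*k := by rw [hk]; push_cast; ring
    have : z ^ (1:ℤ) = 1 := by
      rw [h1, zpow_sub₀ hz0, hzn]
      rw [show (2 * (k:ℤ)) = 2 * (k:ℤ) from rfl, zpow_mul, h, one_zpow, div_one]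
    simpa using this
  set w : ℂ := z ^ (-2:ℤ) with hwdef
  have hw1 : w ≠ 1 := by
    intro h
    apply hz2
    rw [hwdef, zpow_neg, inv_eq_one] at h
    exact h
  have hmul : ∀ a b : ℤ, z ^ a * z ^ b = z ^ (a+b) := fun a b => (zpow_add₀ hz0 a b).symm
  have hpp : ∀ (a:ℤ) (b:ℕ), (z ^ a) ^ b = z ^ (a * b) := by
    intro a b; rw [← zpow_natCast (z^a) b, ← zpow_mul]
  have hinv : ∀ b:ℕ, (z⁻¹)^b = z ^ (-(b:ℤ)) := by
    intro b; rw [inv_pow, ← zpow_natCast, ← zpow_neg]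
  have hchi : ∀ a : ℤ, chiZ n ((a : ZMod n)) g = z ^ a := by
    intro a
    rw [← zpow_zmod_val n z hz0 hzn a]
    show Complex.exp (2 * Real.pi * Complex.I * ((a:ZMod n)).val * g.val / n)
        = z ^ ((((a:ZMod n)).val : ℕ) : ℤ)
    rw [zpow_natCast, hzdef, ← Complex.exp_nat_mul]
    congr 1
    ring
  have hE : ∀ m : ℕ, chiE n (m+1) g = ∑ j ∈ Finset.range (m+2), z ^ ((m:ℤ) + 1 - 2*j) := by
    intro m
    unfold chiE
    apply Finset.sum_congr rfl
    intro j hj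
    have ht : ((m+1 : ℕ) : ZMod n) - 2 * (j:ZMod n) = (((m:ℤ)+1-2*j : ℤ) : ZMod n) := by
      push_cast; ring
    rw [ht, hchi]
  have hzinv1 : z⁻¹ ≠ 1 := fun h => hz1 (by rwa [inv_eq_one] at h)
  calc ∑ m ∈ Finset.range n, chiE n (m+1) g
      = ∑ m ∈ Finset.range n, ((z^(-3:ℤ) * (z⁻¹)^m - z * z^m) / (w - 1)) := by
        apply Finset.sum_congr rfl
        intro m hm
        rw [hE m]
        have hterm : ∀ j ∈ Finset.range (m+2), z ^ ((m:ℤ)+1-2*j) = z^((m:ℤ)+1) * w^j := by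
          intro j hj
          rw [hwdef, hpp, hmul]
          congr 1
        rw [Finset.sum_congr rfl hterm, ← Finset.mul_sum, geom_sum_eq hw1, ← mul_div_assoc]
        congr 1
        rw [mul_sub, mul_one]
        congr 1
        · rw [hwdef, hpp, hmul, hinv, hmul]
          congr 1; push_cast; ring
        · rw [← zpow_natCast z m, add_comm ((m:ℤ)) 1, ← hmul 1 (m:ℤ), zpow_one]
    _ = ((z^(-3:ℤ)) * ∑ m ∈ Finset.range n, (z⁻¹)^m - z * ∑ m ∈ Finset.range n, z^m) / (w - 1) := by
        rw [← Finset.sum_div]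
        congr 1
        rw [Finset.sum_sub_distrib, ← Finset.mul_sum, ← Finset.mul_sum]
    _ = 0 := by
        rw [geom_sum_eq hzinv1, geom_sum_eq hz1, hznn, inv_pow, hznn]
        simp

lemma sum_chiE_zero (n : ℕ) [NeZero n] :
    ∑ m ∈ Finset.range n, chiE n (m + 1) (0 : ZMod n) = (n:ℂ) * ((n:ℂ) + 3) / 2 := by
  have hE : ∀ m:ℕ, chiE n (m+1) (0:ZMod n) = (m:ℂ) + 2 := by
    intro m
    unfold chiE chiZ
    simp [ZMod.val_zero]
    push_cast
    ring
  rw [Finset.sum_congr rfl (fun m _ => hE m)]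
  have h1 : (1:ℕ) ≤ n := Nat.one_le_iff_ne_zero.mpr (NeZero.ne n)
  have h2 : ((∑ i ∈ Finset.range n, i) * 2 : ℕ) = n * (n-1) := Finset.sum_range_id_mul_two n
  have hg : (∑ m ∈ Finset.range n, (m:ℂ)) * 2 = (n:ℂ) * ((n:ℂ) - 1) := by
    have h3 := congrArg (Nat.cast : ℕ → ℂ) h2
    push_cast [Nat.cast_sub h1] at h3
    linear_combination h3
  rw [Finset.sum_add_distrib, Finset.sum_const, Finset.card_range, nsmul_eq_mul]
  linear_combination hg / 2

/-- For `n` odd and `α` any `N`-dimensional representation of `ℤ/nℤ`,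
with `γ_m^α = ⟨χ_{E_{m+1}}, χ_α⟩`, one has `Σ_{m=0}^{n-1} γ_m^α = N(n+3)/2`. -/
theorem sum_gamma_lens_odd
    (n : ℕ) [NeZero n] (hn : Odd n) (N : ℕ)
    (α : Representation ℂ (Multiplicative (ZMod n)) (Fin N → ℂ)) :
    ∑ m ∈ Finset.range n, pairZ n (chiE n (m + 1)) (chiRep α)
      = (N : ℂ) * (n + 3) / 2 := by
  have hn0 : (n:ℂ) ≠ 0 := Nat.cast_ne_zero.mpr (NeZero.ne n)
  have htr : chiRep α (0:ZMod n) = (N:ℂ) := by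
    unfold chiRep
    have h1 : Multiplicative.ofAdd (0:ZMod n) = 1 := rfl
    rw [h1, map_one]
    simp [LinearMap.trace_one]
  unfold pairZ
  rw [← Finset.mul_sum, Finset.sum_comm]
  have hsw : ∀ g : ZMod n, ∑ m ∈ Finset.range n, chiE n (m+1) g * (starRingEnd ℂ) (chiRep α g)
      = (∑ m ∈ Finset.range n, chiE n (m+1) g) * (starRingEnd ℂ) (chiRep α g) :=
    fun g => (Finset.sum_mul _ _ _).symm
  rw [Finset.sum_congr rfl (fun g _ => hsw g)]
  rw [Finset.sum_eq_single_of_mem (0:ZMod n) (Finset.mem_univ _)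
    (fun b _ hb => by rw [sum_chiE_ne_zero n hn b hb, zero_mul])]
  rw [sum_chiE_zero, htr, map_natCast]
  field_simp
end

section
/- Let f : ℝ → ℂ be a Schwartz function, c > 0, a ∈ ℝ, and P(u) a polynomial. Then for Λ > 0, Σ_{l∈ℤ} P(cl + a) f((cl + a)/Λ) = (Λ/c) ∫_ℝ P(Λu) f(u) du + O(Λ^{-k}) as Λ → +∞, for every k ∈ ℕ. -/
/-!
Write `g(u) = P(Λu) f(u)`, `b = c/Λ` and `t = a/c`, so that the sum is `∑ₗ g(b(t + l))`.
Poisson summation turns it into `b⁻¹ ∑ₙ 𝓕g(n/b) e(nt)`, whose `n = 0` term is `(Λ/c) ∫ g`.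
Since `|ξ|^N |𝓕g(ξ)| ≤ Λ^(deg P) A_N` with `A_N` independent of `Λ` (expand `P` into monomials),
the terms `n ≠ 0` contribute `O(b^(N-1) Λ^(deg P) ∑ 1/n²)`, which is `O(Λ^(-k))` for
`N = k + deg P + 2`.
-/

open FourierTransform SchwartzMap Polynomial

theorem Real.fourier_comp_mul_left {E : Type*} [NormedAddCommGroup E] [NormedSpace ℂ E]
    (f : ℝ → E) {b : ℝ} (hb : b ≠ 0) (ξ : ℝ) :
    𝓕 (fun x => f (b * x)) ξ = |b⁻¹| • 𝓕 f (ξ / b) := by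
  simp only [Real.fourier_real_eq]
  rw [← MeasureTheory.Measure.integral_comp_mul_left]
  congr 1 with x
  field_simp

theorem norm_tsum_sub_le_of_norm_le_div_sq {E : Type*} [NormedAddCommGroup E] [CompleteSpace E]
    {T : ℤ → E} {M : ℝ} (hT : ∀ n ≠ 0, ‖T n‖ ≤ M / (n : ℝ) ^ 2) :
    ‖∑' n, T n - T 0‖ ≤ (∑' n : ℤ, 1 / (n : ℝ) ^ 2) * M := by
  have hmajorant : Summable fun n : ℤ => 1 / (n : ℝ) ^ 2 * M :=
    (Real.summable_one_div_int_pow.mpr one_lt_two).mul_right M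
  have hbound : ∀ n : ℤ, ‖if n = 0 then 0 else T n‖ ≤ 1 / (n : ℝ) ^ 2 * M := by
    intro n
    split_ifs with hn
    · simp [hn]
    · simpa [div_eq_inv_mul] using hT n hn
  have hsummable : Summable T := by
    refine hmajorant.of_norm_bounded_eventually ?_
    filter_upwards [Set.finite_singleton (0 : ℤ) |>.compl_mem_cofinite] with n hn
    simpa [if_neg (Set.mem_compl_singleton_iff.mp hn)] using hbound n
  rw [hsummable.tsum_eq_add_tsum_ite 0, add_sub_cancel_left, ← tsum_mul_right]
  exact tsum_of_norm_bounded hmajorant.hasSum hbound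

theorem SchwartzMap.tsum_comp_mul_eq_tsum_fourier (h : 𝓢(ℝ, ℂ)) {b : ℝ} (hb : b ≠ 0) (t : ℝ) :
    ∑' l : ℤ, h (b * (t + l)) =
      ∑' n : ℤ, |b⁻¹| • 𝓕 (h : ℝ → ℂ) (n / b) * fourier n (t : UnitAddCircle) := by
  let H : 𝓢(ℝ, ℂ) := compCLMOfContinuousLinearEquiv ℂ
    (LinearEquiv.smulOfNeZero ℝ ℝ b hb).toContinuousLinearEquiv h
  have hH : ⇑H = fun x => h (b * x) := rfl
  simp_rw [← Real.fourier_comp_mul_left _ hb, ← hH]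
  exact H.tsum_eq_tsum_fourier t

theorem SchwartzMap.norm_le_seminorm_div_abs_pow (g : 𝓢(ℝ, ℂ)) (N : ℕ) {ξ : ℝ} (hξ : ξ ≠ 0) :
    ‖g ξ‖ ≤ SchwartzMap.seminorm ℂ N 0 g / |ξ| ^ N := by
  rw [le_div_iff₀ (by positivity), mul_comm, ← Real.norm_eq_abs]
  exact g.norm_pow_mul_le_seminorm ℂ N ξ

theorem SchwartzMap.norm_tsum_comp_mul_sub_integral_le (h : 𝓢(ℝ, ℂ)) {b : ℝ} (hb : 0 < b)
    (t : ℝ) (m : ℕ) :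
    ‖∑' l : ℤ, h (b * (t + l)) - (b : ℂ)⁻¹ * ∫ u, h u‖ ≤
      (∑' n : ℤ, 1 / (n : ℝ) ^ 2) * (b ^ (m + 1) * SchwartzMap.seminorm ℂ (m + 2) 0 (𝓕 h)) := by
  set D := SchwartzMap.seminorm ℂ (m + 2) 0 (𝓕 h)
  have hzero : |b⁻¹| • 𝓕 (h : ℝ → ℂ) ((0 : ℤ) / b) * fourier 0 (t : UnitAddCircle) =
      (b : ℂ)⁻¹ * ∫ u, h u := by
    simp [Real.fourier_real_eq, abs_of_pos hb, Complex.real_smul]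
  have hcoeff (n : ℤ) (hn : n ≠ 0) :
      ‖|b⁻¹| • 𝓕 (h : ℝ → ℂ) (n / b) * fourier n (t : UnitAddCircle)‖ ≤
        b ^ (m + 1) * D / (n : ℝ) ^ 2 := by
    have hdecay := (𝓕 h).norm_le_seminorm_div_abs_pow (m + 2)
      (div_ne_zero (Int.cast_ne_zero.mpr hn) hb.ne')
    rw [fourier_coe] at hdecay
    have hunit : ‖fourier n (t : UnitAddCircle)‖ = 1 := Circle.norm_coe _
    rw [norm_mul, hunit, mul_one, norm_smul, Real.norm_eq_abs, abs_abs,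
      abs_of_pos (inv_pos.mpr hb)]
    calc b⁻¹ * ‖𝓕 (h : ℝ → ℂ) (n / b)‖
        ≤ b⁻¹ * (D / |n / b| ^ (m + 2)) := by gcongr
      _ = b ^ (m + 1) * D / |(n : ℝ)| ^ (m + 2) := by
        rw [abs_div, abs_of_pos hb, div_pow, pow_succ b (m + 1)]
        field_simp
      _ ≤ b ^ (m + 1) * D / (n : ℝ) ^ 2 := by
        rw [← sq_abs (n : ℝ)]
        have hn1 : 1 ≤ |(n : ℝ)| := by exact_mod_cast Int.one_le_abs hn
        gcongr
        omega
  rw [h.tsum_comp_mul_eq_tsum_fourier hb.ne', ← hzero]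
  exact norm_tsum_sub_le_of_norm_le_div_sq hcoeff

theorem SchwartzMap.norm_tsum_div_sub_integral_le (h : 𝓢(ℝ, ℂ)) {c Λ : ℝ} (hc : 0 < c)
    (hΛ : 0 < Λ) (a : ℝ) (m : ℕ) :
    ‖∑' l : ℤ, h ((c * l + a) / Λ) - ((Λ : ℂ) / c) * ∫ u, h u‖ ≤
      (∑' n : ℤ, 1 / (n : ℝ) ^ 2) *
        ((c / Λ) ^ (m + 1) * SchwartzMap.seminorm ℂ (m + 2) 0 (𝓕 h)) := by
  have hpoint (l : ℤ) : (c * l + a) / Λ = c / Λ * (a / c + l) := by field_simp; ring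
  have hscale : (Λ : ℂ) / c = ((c / Λ : ℝ) : ℂ)⁻¹ := by push_cast; rw [inv_div]
  simp_rw [hpoint, hscale]
  exact h.norm_tsum_comp_mul_sub_integral_le (by positivity) _ _

noncomputable def SchwartzMap.polynomialWeight (P : ℂ[X]) (Λ : ℝ) (f : 𝓢(ℝ, ℂ)) : 𝓢(ℝ, ℂ) :=
  ∑ j ∈ Finset.range (P.natDegree + 1),
    (P.coeff j * (Λ : ℂ) ^ j) • smulLeftCLM ℂ (fun u : ℝ => (u : ℂ) ^ j) f

theorem SchwartzMap.polynomialWeight_apply (P : ℂ[X]) (Λ : ℝ) (f : 𝓢(ℝ, ℂ)) (u : ℝ) :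
    polynomialWeight P Λ f u = P.eval ((Λ * u : ℝ) : ℂ) * f u := by
  have hpow (j : ℕ) : Function.HasTemperateGrowth (fun u : ℝ => (u : ℂ) ^ j) := by fun_prop
  simp only [polynomialWeight, sum_apply, smul_apply, smulLeftCLM_apply_apply (hpow _),
    smul_eq_mul, Complex.ofReal_mul, eval_eq_sum_range, mul_pow, Finset.sum_mul]
  exact Finset.sum_congr rfl fun j _ => by ring

theorem SchwartzMap.seminorm_fourier_polynomialWeight_le (P : ℂ[X]) {Λ : ℝ} (hΛ : 1 ≤ Λ)
    (f : 𝓢(ℝ, ℂ)) (N : ℕ) :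
    SchwartzMap.seminorm ℂ N 0 (𝓕 (polynomialWeight P Λ f)) ≤ Λ ^ P.natDegree *
      ∑ j ∈ Finset.range (P.natDegree + 1),
        ‖P.coeff j‖ *
          SchwartzMap.seminorm ℂ N 0 (𝓕 (smulLeftCLM ℂ (fun u : ℝ => (u : ℂ) ^ j) f)) := by
  set p : Seminorm ℂ 𝓢(ℝ, ℂ) := SchwartzMap.seminorm ℂ N 0
  rw [polynomialWeight, fourier_sum, Finset.mul_sum]
  refine (Finset.le_sum_of_subadditive p (map_zero p).le (map_add_le_add p) _ _).trans
    (Finset.sum_le_sum fun j hj => ?_)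
  have hjd : j ≤ P.natDegree := Nat.lt_succ_iff.mp (Finset.mem_range.mp hj)
  rw [fourier_smul, map_smul_eq_mul, norm_mul, norm_pow, Complex.norm_real, Real.norm_eq_abs,
    abs_of_nonneg (by linarith)]
  calc ‖P.coeff j‖ * Λ ^ j * p _ ≤ ‖P.coeff j‖ * Λ ^ P.natDegree * p _ := by
        gcongr
    _ = _ := by ring

theorem div_pow_succ_add_mul_pow_le {c Λ : ℝ} (hc : 0 ≤ c) (hΛ : 1 ≤ Λ) (k d : ℕ) :
    (c / Λ) ^ (k + d + 1) * Λ ^ d ≤ c ^ (k + d + 1) / Λ ^ k := by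
  have hΛ0 : 0 < Λ := one_pos.trans_le hΛ
  have hcancel :
      c ^ (k + d + 1) / (Λ ^ k * Λ ^ d * Λ) * Λ ^ d = c ^ (k + d + 1) / Λ ^ k / Λ := by
    field_simp
  rw [div_pow, pow_succ Λ, pow_add Λ k d, hcancel]
  exact div_le_self (by positivity) hΛ

/-- Let `f` be Schwartz, `c > 0`, `a ∈ ℝ`, and `P` a polynomial.
Then for `Λ > 0`,
`Σ_{l∈ℤ} P(cl + a) f((cl + a)/Λ) = (Λ/c) ∫_ℝ P(Λu) f(u) du + O(Λ^{-k})` as `Λ → +∞`,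
for every `k ∈ ℕ`. -/
theorem poisson_summation_polynomial_weight
    (f : SchwartzMap ℝ ℂ) (c a : ℝ) (hc : 0 < c) (P : Polynomial ℂ) (k : ℕ) :
    ∃ C : ℝ, ∀ Λ : ℝ, 1 ≤ Λ →
      ‖(∑' l : ℤ, P.eval ((c * l + a : ℝ) : ℂ) * f ((c * l + a) / Λ))
          - ((Λ : ℂ) / c) * ∫ u : ℝ, P.eval ((Λ * u : ℝ) : ℂ) * f u‖
        ≤ C / Λ ^ k := by
  set d := P.natDegree
  set A := ∑ j ∈ Finset.range (d + 1), ‖P.coeff j‖ *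
    SchwartzMap.seminorm ℂ (k + d + 2) 0 (𝓕 (smulLeftCLM ℂ (fun u : ℝ => (u : ℂ) ^ j) f))
  set S := ∑' n : ℤ, 1 / (n : ℝ) ^ 2
  refine ⟨S * (c ^ (k + d + 1) * A), fun Λ hΛ => ?_⟩
  have hΛ0 : 0 < Λ := one_pos.trans_le hΛ
  have hsum : ∑' l : ℤ, P.eval ((c * l + a : ℝ) : ℂ) * f ((c * l + a) / Λ) =
      ∑' l : ℤ, polynomialWeight P Λ f ((c * l + a) / Λ) :=
    tsum_congr fun l => by rw [polynomialWeight_apply, mul_div_cancel₀ _ hΛ0.ne']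
  rw [hsum]
  simp_rw [← polynomialWeight_apply]
  calc _ ≤ S * ((c / Λ) ^ (k + d + 1) * SchwartzMap.seminorm ℂ (k + d + 2) 0
          (𝓕 (polynomialWeight P Λ f))) := norm_tsum_div_sub_integral_le _ hc hΛ0 a _
    _ ≤ S * ((c / Λ) ^ (k + d + 1) * (Λ ^ d * A)) := by
        gcongr
        exact seminorm_fourier_polynomialWeight_le P hΛ f _
    _ = S * A * ((c / Λ) ^ (k + d + 1) * Λ ^ d) := by ring
    _ ≤ S * A * (c ^ (k + d + 1) / Λ ^ k) := by
        have hS : 0 ≤ S := tsum_nonneg fun n => by positivity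
        gcongr
        exact div_pow_succ_add_mul_pow_le hc.le hΛ k d
    _ = _ := by ring
end

section
/- Suppose f : ℝ → ℂ is Schwartz and a spectrum consists of eigenvalues λ = 1/2 + k for k ∈ ℤ with multiplicity Q(1/2 + k), where Q(u) = A(u² − 1/4) for a constant A > 0. Then Σ_{k∈ℤ} Q(1/2+k) f((1/2+k)/Λ) = A(Λ³ ∫_ℝ u² f(u) du − (Λ/4) ∫_ℝ f(u) du) + O(Λ^{-∞}) as Λ → +∞. -/
/-!
Write `(A(u² − 1/4)) f(u/Λ) = AΛ² p(u/Λ) − (A/4) f(u/Λ)` with `p(u) = u² f(u)`, so it suffices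
to show `∑ₙ φ((a + n)/Λ) = Λ ∫ φ + O(Λ^{-∞})` for every Schwartz `φ`. By Poisson summation
applied to `x ↦ φ(x/Λ)`, whose Fourier transform is `ξ ↦ Λ 𝓕φ(Λξ)`, the left side is
`∑ₙ Λ 𝓕φ(Λn) e^{2πina}`: the mode `n = 0` is `Λ ∫ φ`, and the rapid decay of `𝓕φ` bounds
the others by `C Λ^{-k} n^{-2}`.
-/

open MeasureTheory SchwartzMap
open scoped FourierTransform

namespace Real

variable {E : Type*} [NormedAddCommGroup E] [NormedSpace ℂ E]

theorem fourier_comp_div (u : ℝ → E) {c : ℝ} (hc : c ≠ 0) (ξ : ℝ) :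
    𝓕 (fun x => u (x / c)) ξ = |c| • 𝓕 u (c * ξ) := by
  have h := Measure.integral_comp_mul_right (fun y => 𝐞 (-(y * (c * ξ))) • u y) c⁻¹
  rw [inv_inv] at h
  rw [fourier_real_eq, fourier_real_eq, ← h]
  congr 1 with x
  field_simp

theorem fourier_apply_zero (u : ℝ → E) : 𝓕 u 0 = ∫ x, u x := by
  simp [fourier_real_eq]

end Real

theorem summable_int_inv_sq : Summable fun n : ℤ => ((n : ℝ) ^ 2)⁻¹ := by
  simpa only [one_div] using Real.summable_one_div_int_pow.mpr one_lt_two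

namespace SchwartzMap

variable {E : Type*} [NormedAddCommGroup E] [NormedSpace ℝ E]

theorem summable_norm_int (φ : 𝓢(ℝ, E)) : Summable fun n : ℤ => ‖φ n‖ := by
  refine summable_of_isBigO (Real.summable_abs_int_rpow one_lt_two) ?_
  have h := ((φ.isBigO_cocompact_rpow (-2)).comp_tendsto Int.tendsto_coe_cofinite).norm_left
  simp only [Function.comp_def, Real.norm_eq_abs] at h
  exact h

noncomputable def dilate {Λ : ℝ} (hΛ : Λ ≠ 0) (φ : 𝓢(ℝ, E)) : 𝓢(ℝ, E) :=
  compCLMOfContinuousLinearEquiv ℝ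
    (ContinuousLinearEquiv.unitsEquivAut ℝ (Units.mk0 Λ⁻¹ (inv_ne_zero hΛ))) φ

@[simp]
theorem dilate_apply {Λ : ℝ} (hΛ : Λ ≠ 0) (φ : 𝓢(ℝ, E)) (x : ℝ) : dilate hΛ φ x = φ (x / Λ) := by
  simp [dilate, ContinuousLinearEquiv.unitsEquivAut_apply, div_eq_mul_inv]

theorem mul_norm_apply_mul_int_le (ψ : 𝓢(ℝ, E)) (k : ℕ) {Λ : ℝ} (hΛ : 1 ≤ Λ) {n : ℤ}
    (hn : n ≠ 0) :
    Λ * ‖ψ (Λ * n)‖ ≤ SchwartzMap.seminorm ℝ (k + 3) 0 ψ / Λ ^ k * ((n : ℝ) ^ 2)⁻¹ := by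
  have hn : 1 ≤ |(n : ℝ)| := by exact_mod_cast Int.one_le_abs hn
  have hdecay := norm_pow_mul_le_seminorm ℝ ψ (k + 3) (Λ * n)
  rw [Real.norm_eq_abs, abs_mul, abs_of_nonneg (by linarith), mul_pow] at hdecay
  have hpow : Λ ^ (k + 1) * |(n : ℝ)| ^ 2 ≤ Λ ^ (k + 3) * |(n : ℝ)| ^ (k + 3) :=
    mul_le_mul (pow_le_pow_right₀ hΛ (by omega)) (pow_le_pow_right₀ hn (by omega))
      (by positivity) (by positivity)
  rw [← sq_abs, ← div_eq_mul_inv, div_div, le_div_iff₀ (by positivity)]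
  calc Λ * ‖ψ (Λ * n)‖ * (Λ ^ k * |(n : ℝ)| ^ 2)
      = Λ ^ (k + 1) * |(n : ℝ)| ^ 2 * ‖ψ (Λ * n)‖ := by ring
    _ ≤ Λ ^ (k + 3) * |(n : ℝ)| ^ (k + 3) * ‖ψ (Λ * n)‖ := by gcongr
    _ ≤ SchwartzMap.seminorm ℝ (k + 3) 0 ψ := hdecay

theorem summable_comp_add_int_div [CompleteSpace E] (φ : 𝓢(ℝ, E)) (a : ℝ) {Λ : ℝ} (hΛ : Λ ≠ 0) :
    Summable fun n : ℤ => φ ((a + n) / Λ) := by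
  refine (summable_norm_int (compSubConstCLM ℝ (-a) (dilate hΛ φ))).of_norm.congr fun n => ?_
  rw [compSubConstCLM_apply, dilate_apply, sub_neg_eq_add, add_comm]

theorem exists_norm_tsum_dilate_sub_integral_le (φ : 𝓢(ℝ, ℂ)) (a : ℝ) (k : ℕ) :
    ∃ C : ℝ, ∀ Λ : ℝ, 1 ≤ Λ → ‖∑' n : ℤ, φ ((a + n) / Λ) - Λ • ∫ x, φ x‖ ≤ C / Λ ^ k := by
  set B := SchwartzMap.seminorm ℝ (k + 3) 0 (𝓕 φ)
  refine ⟨B * ∑' n : ℤ, ((n : ℝ) ^ 2)⁻¹, fun Λ hΛ => ?_⟩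
  have hΛ0 : Λ ≠ 0 := by positivity
  set g := dilate hΛ0 φ
  have hFg (ξ : ℝ) : 𝓕 g ξ = Λ • 𝓕 φ (Λ * ξ) := by
    rw [fourier_coe, show ⇑g = fun x => φ (x / Λ) from funext (dilate_apply hΛ0 φ),
      Real.fourier_comp_div _ hΛ0, abs_of_pos (by positivity)]
    rfl
  have hfourier (n : ℤ) : ‖fourier n (a : UnitAddCircle)‖ = 1 := Circle.norm_coe _
  set c : ℤ → ℂ := fun n => 𝓕 g n * fourier n (a : UnitAddCircle)
  have hc (n : ℤ) : ‖c n‖ = Λ * ‖𝓕 φ (Λ * n)‖ := by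
    rw [norm_mul, hfourier, mul_one, hFg, norm_smul, Real.norm_of_nonneg (by positivity)]
  have hc0 : c 0 = Λ • ∫ x, φ x := by
    simp only [c, Int.cast_zero, fourier_zero, mul_one, hFg, mul_zero, fourier_coe,
      Real.fourier_apply_zero]
  have hsum : Summable c :=
    (summable_norm_int (𝓕 g)).of_norm_bounded fun n => by rw [norm_mul, hfourier, mul_one]
  have hpoisson : ∑' n : ℤ, φ ((a + n) / Λ) = ∑' n, c n := by
    simpa only [g, dilate_apply] using g.tsum_eq_tsum_fourier a
  rw [hpoisson, hsum.tsum_eq_add_tsum_ite 0, hc0, add_sub_cancel_left, mul_div_right_comm]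
  refine tsum_of_norm_bounded
    (summable_int_inv_sq.hasSum.mul_left (B / Λ ^ k)) fun n => ?_
  split_ifs with hn
  · simp [hn] -- `((0 : ℝ) ^ 2)⁻¹ = 0`, so the bound is `0 ≤ 0`
  · simpa [hc] using mul_norm_apply_mul_int_le (𝓕 φ) k hΛ hn

end SchwartzMap

theorem spectral_action_quadratic_multiplicity_general
    (f : SchwartzMap ℝ ℂ) (A : ℝ) (k : ℕ) :
    ∃ C : ℝ, ∀ Λ : ℝ, 1 ≤ Λ →
      ‖(∑' j : ℤ, (A * ((1 / 2 + (j : ℝ)) ^ 2 - 1 / 4)) • f ((1 / 2 + (j : ℝ)) / Λ))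
          - A • ((Λ ^ 3) • (∫ u : ℝ, (u ^ 2) • f u) - (Λ / 4) • ∫ u : ℝ, f u)‖
        ≤ C / Λ ^ k := by
  set p := smulLeftCLM ℂ (fun x : ℝ => x ^ 2) f
  have hp (x : ℝ) : p x = x ^ 2 • f x := smulLeftCLM_apply_apply (by fun_prop) f x
  obtain ⟨C₁, h₁⟩ := exists_norm_tsum_dilate_sub_integral_le p (1 / 2) (k + 2)
  obtain ⟨C₂, h₂⟩ := exists_norm_tsum_dilate_sub_integral_le f (1 / 2) k
  refine ⟨|A| * C₁ + |A| / 4 * C₂, fun Λ hΛ => ?_⟩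
  have hΛ0 : Λ ≠ 0 := by positivity
  have hsp := summable_comp_add_int_div p (1 / 2) hΛ0
  have hsf := summable_comp_add_int_div f (1 / 2) hΛ0
  have hsplit : ∑' j : ℤ, (A * ((1 / 2 + (j : ℝ)) ^ 2 - 1 / 4)) • f ((1 / 2 + (j : ℝ)) / Λ)
      = (A * Λ ^ 2) • ∑' j : ℤ, p ((1 / 2 + j) / Λ) - (A / 4) • ∑' j : ℤ, f ((1 / 2 + j) / Λ) := by
    rw [← hsp.tsum_const_smul, ← hsf.tsum_const_smul,
      ← (hsp.const_smul _).tsum_sub (hsf.const_smul _)]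
    congr with j
    rw [hp, smul_smul, ← sub_smul]
    congr 1
    field_simp
  have hint : ∫ u : ℝ, u ^ 2 • f u = ∫ x, p x := by simp only [hp]
  calc _ = ‖(A * Λ ^ 2) • (∑' j : ℤ, p ((1 / 2 + j) / Λ) - Λ • ∫ x, p x)
        - (A / 4) • (∑' j : ℤ, f ((1 / 2 + j) / Λ) - Λ • ∫ x, f x)‖ := by
        rw [hsplit, hint]
        congr 1
        module
    _ ≤ |A| * Λ ^ 2 * (C₁ / Λ ^ (k + 2)) + |A| / 4 * (C₂ / Λ ^ k) := by
        refine norm_sub_le_of_le ?_ ?_ <;> rw [norm_smul, Real.norm_eq_abs]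
        · rw [abs_mul, abs_sq]
          gcongr
          exact h₁ Λ hΛ
        · rw [abs_div, Nat.abs_ofNat]
          gcongr
          exact h₂ Λ hΛ
    _ = (|A| * C₁ + |A| / 4 * C₂) / Λ ^ k := by
        field_simp
        ring

/-- Suppose `f` is Schwartz and a spectrum consists of the eigenvalues
`λ = 1/2 + k`, `k ∈ ℤ`, with multiplicity `Q(1/2 + k)` where `Q(u) = A(u² − 1/4)`,
`A > 0`.  Then
`Σ_{k∈ℤ} Q(1/2+k) f((1/2+k)/Λ) = A(Λ³ ∫ u² f(u) du − (Λ/4) ∫ f(u) du) + O(Λ^{-∞})`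
as `Λ → +∞`. -/
theorem spectral_action_quadratic_multiplicity
    (f : SchwartzMap ℝ ℂ) (A : ℝ) (hA : 0 < A) (k : ℕ) :
    ∃ C : ℝ, ∀ Λ : ℝ, 1 ≤ Λ →
      ‖(∑' j : ℤ, (A * ((1 / 2 + (j : ℝ)) ^ 2 - 1 / 4)) • f ((1 / 2 + (j : ℝ)) / Λ))
          - A • ((Λ ^ 3) • (∫ u : ℝ, (u ^ 2) • f u) - (Λ / 4) • ∫ u : ℝ, f u)‖
        ≤ C / Λ ^ k :=
  spectral_action_quadratic_multiplicity_general f A k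
end

section
/- Let the dicyclic group Γ of order 4r (r even) have exponent c_Γ = 2r, and let α be an irreducible representation of Γ. Then Σ_{m=1}^{c_Γ} β_m^α equals r/2 if α is one of the four 1-dimensional representations, r if α = ψ_t with t even, and r+1 if α = ψ_t with t odd, where ψ_t (1 ≤ t ≤ r−1) are the 2-dimensional irreducibles. -/
open Finset

/-- The characters of the restrictions to a subgroup of `SU(2)` of the irreducible
`SU(2)`-representations `E_k`, defined from the character `tr` of the standard
representation by the Clebsch–Gordan recursion. -/
noncomputable def chiERec {G : Type*} (tr : G → ℂ) : ℕ → G → ℂ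
  | 0, _ => 1
  | 1, g => tr g
  | (k + 2), g => tr g * chiERec tr (k + 1) g - chiERec tr k g

/-- The character of the standard 2-dimensional representation of the dicyclic group
`Dic_r = QuaternionGroup r ⊂ SU(2)`:  `a^i ↦ diag(ζ^i, ζ^{-i})`, `x a^i ↦ antidiagonal`,
with `ζ = e^{πi/r}`; more generally `ψ_t` with `ζ^t` in place of `ζ`. -/
noncomputable def psiT (r : ℕ) (t : ℕ) : QuaternionGroup r → ℂ
  | .a i => Complex.exp (Real.pi * Complex.I * t * i.val / r)
      + Complex.exp (-(Real.pi * Complex.I * t * i.val / r))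
  | .xa _ => 0

/-- The 1-dimensional characters of the dicyclic group `Dic_r` for `r` even, determined
by signs `ε₁ = χ(a)` and `ε₂ = χ(x)` with `ε₁² = ε₂² = 1`. -/
def dicChar1 (r : ℕ) (ε₁ ε₂ : ℂ) : QuaternionGroup r → ℂ
  | .a i => ε₁ ^ i.val
  | .xa i => ε₂ * ε₁ ^ i.val

/-- The character inner product on the dicyclic group `QuaternionGroup r` (of order `4r`). -/
noncomputable def pairQ (r : ℕ) [NeZero r] (f h : QuaternionGroup r → ℂ) : ℂ :=
  (Fintype.card (QuaternionGroup r) : ℂ)⁻¹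
    * ∑ g : QuaternionGroup r, f g * (starRingEnd ℂ) (h g)

/-! By the Clebsch–Gordan recursion `χ_{E_k} = S_k(ψ₁)`, with `S_k` the rescaled Chebyshev
polynomials. Write `ψ₁(a^i) = z + z⁻¹` with `z = ζ_{2r}^i`. Since `(z - z⁻¹) S_k(z + z⁻¹) = z^{k+1} - z^{-(k+1)}`,
the summed character `∑_{k<2r} χ_{E_k}` vanishes at `a^i` by a geometric sum unless `z = ±1`, i.e.
`i ∈ {0, r}`; at `x a^i` the trace is `0 = I + I⁻¹` with `I^{2r} = 1` because `r` is even. So the summed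
character lives on the centre `{1, a^r}`, with values `r(2r+1)` and `-r`, and its pairing with `α` is
`(r(2r+1) conj α(1) - r conj α(a^r)) / 4r`. -/

open Polynomial Chebyshev ComplexConjugate

namespace Polynomial.Chebyshev

theorem S_eval_add_mul_sub {R : Type*} [CommRing R] (x y : R) (hxy : x * y = 1) :
    ∀ n : ℕ, (S R n).eval (x + y) * (x - y) = x ^ (n + 1) - y ^ (n + 1)
  | 0 => by simp
  | 1 => by
    simp only [Nat.cast_one, S_one, eval_X]
    ring
  | n + 2 => by
    have h1 := S_eval_add_mul_sub x y hxy (n + 1)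
    have h0 := S_eval_add_mul_sub x y hxy n
    push_cast at h1 ⊢
    rw [S_add_two, eval_sub, eval_mul, eval_X]
    linear_combination (x + y) * h1 - h0 + (x ^ (n + 1) - y ^ (n + 1)) * hxy

theorem two_mul_sum_range_S_eval_two (R : Type*) [CommRing R] (n : ℕ) :
    2 * ∑ k ∈ range n, (S R k).eval 2 = n * (n + 1) := by
  induction n with
  | zero => simp
  | succ n ih =>
    rw [sum_range_succ, mul_add, ih, S_eval_two]
    push_cast
    ring

theorem sum_range_two_mul_S_eval_neg_two (R : Type*) [CommRing R] (n : ℕ) :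
    ∑ k ∈ range (2 * n), (S R k).eval (-2) = -n := by
  induction n with
  | zero => simp
  | succ n ih =>
    rw [show 2 * (n + 1) = 2 * n + 1 + 1 by ring, sum_range_succ, sum_range_succ, ih,
      S_eval_neg_two, S_eval_neg_two]
    push_cast [Int.negOnePow_succ, Int.negOnePow_even _ (even_two_mul _)]
    ring

theorem sum_range_S_eval_add_inv_eq_zero {K : Type*} [Field K] {z : K} {n : ℕ}
    (hzn : z ^ n = 1) (hz : z ^ 2 ≠ 1) : ∑ k ∈ range n, (S K k).eval (z + z⁻¹) = 0 := by
  rcases eq_or_ne n 0 with rfl | hn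
  · simp
  have hz₀ : z ≠ 0 := by rintro rfl; simp [zero_pow hn] at hzn
  have hz₁ : z ≠ 1 := by rintro rfl; simp at hz
  have hsub : z - z⁻¹ ≠ 0 := by
    rw [sub_ne_zero]
    rintro h
    exact hz (by rw [sq]; nth_rewrite 2 [h]; exact mul_inv_cancel₀ hz₀)
  have geom_sum_eq_zero (w : K) (hw : w ^ n = 1) (hw₁ : w ≠ 1) : ∑ k ∈ range n, w ^ k = 0 :=
    (mul_eq_zero.1 (by rw [geom_sum_mul, hw, sub_self])).resolve_right (sub_ne_zero.2 hw₁)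
  refine (mul_eq_zero.1 ?_).resolve_right hsub
  calc (∑ k ∈ range n, (S K k).eval (z + z⁻¹)) * (z - z⁻¹)
      = ∑ k ∈ range n, (z ^ (k + 1) - z⁻¹ ^ (k + 1)) := by
        rw [sum_mul]
        exact sum_congr rfl fun k _ => S_eval_add_mul_sub z z⁻¹ (mul_inv_cancel₀ hz₀) k
    _ = z * ∑ k ∈ range n, z ^ k - z⁻¹ * ∑ k ∈ range n, z⁻¹ ^ k := by
        simp only [pow_succ', sum_sub_distrib, mul_sum]
    _ = 0 := by
        rw [geom_sum_eq_zero z hzn hz₁,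
          geom_sum_eq_zero z⁻¹ (by rw [inv_pow, hzn, inv_one]) (inv_ne_one.2 hz₁)]
        simp

end Polynomial.Chebyshev

theorem Finset.sum_Icc_one_sub_one {M : Type*} [AddCommMonoid M] (f : ℕ → M) (n : ℕ) :
    ∑ m ∈ Icc 1 n, f (m - 1) = ∑ k ∈ range n, f k := by
  rw [← Ico_add_one_right_eq_Icc, sum_Ico_eq_sum_range, Nat.add_sub_cancel]
  simp

theorem ZMod.val_natCast_self_two_mul (r : ℕ) [NeZero r] : (r : ZMod (2 * r)).val = r :=
  ZMod.val_natCast_of_lt (by have := NeZero.pos r; omega)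

theorem chiERec_eq_eval_S {G : Type*} (tr : G → ℂ) :
    ∀ (k : ℕ) (g : G), chiERec tr k g = (S ℂ k).eval (tr g)
  | 0, _ => by simp [chiERec]
  | 1, _ => by simp [chiERec]
  | k + 2, g => by
    rw [chiERec, chiERec_eq_eval_S tr (k + 1) g, chiERec_eq_eval_S tr k g]
    push_cast
    rw [S_add_two, eval_sub, eval_mul, eval_X]

section Dicyclic

noncomputable def dicZeta (r : ℕ) : ℂ := Complex.exp (Real.pi * Complex.I / r)

noncomputable def sumChiE (r : ℕ) : QuaternionGroup r → ℂ :=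
  ∑ k ∈ range (2 * r), chiERec (psiT r 1) k

variable {r : ℕ}

theorem psiT_a (t : ℕ) (i : ZMod (2 * r)) :
    psiT r t (.a i) = dicZeta r ^ (t * i.val) + (dicZeta r ^ (t * i.val))⁻¹ := by
  rw [psiT, dicZeta, ← Complex.exp_nat_mul, ← Complex.exp_neg]
  push_cast
  ring_nf

theorem psiT_a_zero (t : ℕ) : psiT r t (.a 0) = 2 := by
  rw [psiT_a]
  norm_num

theorem sumChiE_apply (g : QuaternionGroup r) :
    sumChiE r g = ∑ k ∈ range (2 * r), (S ℂ k).eval (psiT r 1 g) := by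
  simp only [sumChiE, Finset.sum_apply, chiERec_eq_eval_S]

theorem sumChiE_a_zero : sumChiE r (.a 0) = r * (2 * r + 1) := by
  have h := two_mul_sum_range_S_eval_two ℂ (2 * r)
  rw [sumChiE_apply, psiT_a_zero]
  push_cast at h
  linear_combination h / 2

variable [NeZero r]

theorem isPrimitiveRoot_dicZeta : IsPrimitiveRoot (dicZeta r) (2 * r) := by
  rw [dicZeta]
  convert Complex.isPrimitiveRoot_exp (2 * r) (NeZero.ne _) using 2
  push_cast
  field_simp

theorem dicZeta_pow_self : dicZeta r ^ r = -1 := by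
  rw [dicZeta, ← Complex.exp_nat_mul, mul_div_cancel₀ _ (Nat.cast_ne_zero.2 (NeZero.ne r)),
    Complex.exp_pi_mul_I]

theorem psiT_a_natCast_self (t : ℕ) : psiT r t (.a r) = 2 * (-1) ^ t := by
  rw [psiT_a, ZMod.val_natCast_self_two_mul, mul_comm, pow_mul, dicZeta_pow_self, ← inv_pow,
    inv_neg_one]
  ring

theorem dicChar1_a_natCast_self (ε₁ ε₂ : ℂ) : dicChar1 r ε₁ ε₂ (.a r) = ε₁ ^ r := by
  rw [dicChar1, ZMod.val_natCast_self_two_mul]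

theorem sumChiE_a_natCast_self : sumChiE r (.a r) = -r := by
  rw [sumChiE_apply, psiT_a_natCast_self, pow_one, mul_neg_one,
    sum_range_two_mul_S_eval_neg_two]

theorem sumChiE_eq_zero (hr : Even r) (g : QuaternionGroup r) (h₀ : g ≠ .a 0)
    (hᵣ : g ≠ .a r) : sumChiE r g = 0 := by
  rw [sumChiE_apply]
  cases g with
  | a i =>
    have hi₀ : i.val ≠ 0 := fun h => h₀ (by rw [(ZMod.val_eq_zero i).1 h])
    have hiᵣ : i.val ≠ r := fun h => hᵣ (by rw [← ZMod.natCast_zmod_val i, h])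
    have hζ := isPrimitiveRoot_dicZeta (r := r)
    rw [psiT_a, one_mul]
    refine sum_range_S_eval_add_inv_eq_zero ?_ ?_
    · rw [← pow_mul, mul_comm, pow_mul, hζ.pow_eq_one, one_pow]
    · rw [Ne, ← pow_mul, hζ.pow_eq_one_iff_dvd]
      rintro ⟨c, hc⟩
      have := i.val_lt
      rcases c with _ | _ | c
      · omega
      · omega
      · nlinarith
  | xa i =>
    obtain ⟨s, rfl⟩ := hr
    have hI : Complex.I ^ (2 * (s + s)) = 1 := by
      rw [show 2 * (s + s) = 4 * s by ring, pow_mul, Complex.I_pow_four, one_pow]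
    rw [psiT]
    simpa using sum_range_S_eval_add_inv_eq_zero hI (by norm_num)

theorem pairQ_sum_left {ι : Type*} (s : Finset ι) (f : ι → QuaternionGroup r → ℂ)
    (h : QuaternionGroup r → ℂ) : pairQ r (∑ i ∈ s, f i) h = ∑ i ∈ s, pairQ r (f i) h := by
  simp only [pairQ, Finset.sum_apply, sum_mul, mul_sum]
  exact sum_comm

theorem pairQ_sumChiE (hr : Even r) (h : QuaternionGroup r → ℂ) :
    pairQ r (sumChiE r) h
      = (4 * r : ℂ)⁻¹ * (r * (2 * r + 1) * conj (h (.a 0)) - r * conj (h (.a r))) := by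
  have hne : (QuaternionGroup.a 0 : QuaternionGroup r) ≠ .a r := fun h => by
    have := congrArg ZMod.val (QuaternionGroup.a.inj h)
    rw [ZMod.val_zero, ZMod.val_natCast_self_two_mul] at this
    exact NeZero.ne r this.symm
  rw [pairQ, QuaternionGroup.card, Fintype.sum_eq_add _ _ hne
    (fun g hg => by rw [sumChiE_eq_zero hr g hg.1 hg.2, zero_mul]), sumChiE_a_zero,
    sumChiE_a_natCast_self]
  push_cast
  ring

end Dicyclic

/-- Let `Γ` be the dicyclic group of order `4r` with `r` even, so that
its exponent is `c_Γ = 2r`.  With `β_m^α = ⟨χ_{E_{m-1}}, χ_α⟩_Γ`, the sum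
`Σ_{m=1}^{2r} β_m^α` equals `r/2` for each of the four 1-dimensional representations,
`r` for `α = ψ_t` with `t` even, and `r+1` for `α = ψ_t` with `t` odd
(`1 ≤ t ≤ r−1` indexing the 2-dimensional irreducibles `ψ_t`). -/
theorem dicyclic_even_beta_sums
    (r : ℕ) [NeZero r] (hr : Even r) :
    (∀ ε₁ ε₂ : ℂ, ε₁ ^ 2 = 1 → ε₂ ^ 2 = 1 →
      ∑ m ∈ Finset.Icc 1 (2 * r),
          pairQ r (chiERec (psiT r 1) (m - 1)) (dicChar1 r ε₁ ε₂) = (r : ℂ) / 2)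
    ∧ ∀ t ∈ Finset.Icc 1 (r - 1),
      ∑ m ∈ Finset.Icc 1 (2 * r),
          pairQ r (chiERec (psiT r 1) (m - 1)) (psiT r t)
        = if Even t then (r : ℂ) else (r : ℂ) + 1 := by
  have hsum (h : QuaternionGroup r → ℂ) :
      ∑ m ∈ Icc 1 (2 * r), pairQ r (chiERec (psiT r 1) (m - 1)) h
        = (4 * r : ℂ)⁻¹ * (r * (2 * r + 1) * conj (h (.a 0)) - r * conj (h (.a r))) := by
    rw [sum_Icc_one_sub_one (fun k => pairQ r (chiERec (psiT r 1) k) h), ← pairQ_sum_left,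
      ← sumChiE, pairQ_sumChiE hr]
  have hr₀ : (r : ℂ) ≠ 0 := Nat.cast_ne_zero.2 (NeZero.ne r)
  refine ⟨fun ε₁ ε₂ hε₁ _ => ?_, fun t _ => ?_⟩
  · obtain ⟨s, hs⟩ := hr
    have hε₁r : ε₁ ^ r = 1 := by rw [hs, ← two_mul, pow_mul, hε₁, one_pow]
    rw [hsum, dicChar1_a_natCast_self, hε₁r]
    simp only [dicChar1, ZMod.val_zero, pow_zero, map_one]
    field_simp
    ring
  · rw [hsum, psiT_a_zero, psiT_a_natCast_self]
    rcases Nat.even_or_odd t with ht | ht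
    · simp only [ht, ht.neg_one_pow, if_true, mul_one, map_ofNat]
      field_simp
      ring
    · simp only [Nat.not_even_iff_odd.2 ht, ht.neg_one_pow, if_false, map_mul, map_neg, map_one,
        map_ofNat]
      field_simp
      ring
end

section
/- Let Γ be the binary tetrahedral group (order 24, exponent 12) with irreducible characters χ₁,…,χ₇ of dimensions 1,1,1,2,2,2,3. Then Σ_{m=1}^{12} ⟨χ_{E_{m-1}}, χ_α⟩_Γ equals 3 if α ∈ {χ₁,χ₂,χ₃}, 7 if α ∈ {χ₄,χ₅,χ₆}, and 9 if α = χ₇; and Σ_{m=0}^{11} ⟨χ_{E_{m+1}}, χ_α⟩_Γ equals 4, 7, 12 respectively. -/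
open Finset

/-- The group `SL(2,ℂ)`; a finite subgroup of `SU(2)` is a subgroup of `SL(2,ℂ)` all of
whose elements are unitary matrices. -/
abbrev SL2C := Matrix.SpecialLinearGroup (Fin 2) ℂ

/-- A subgroup of `SL(2,ℂ)` lies in `SU(2)` when all its elements are unitary. -/
def IsSU2Subgroup (Γ : Subgroup SL2C) : Prop :=
  ∀ g : Γ, ((g : SL2C) : Matrix (Fin 2) (Fin 2) ℂ) ∈ Matrix.unitaryGroup (Fin 2) ℂ

/-- The character of the `(k+1)`-dimensional irreducible representation `E_k` of `SU(2)`,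
defined by the Clebsch–Gordan recursion `χ_{E_{k+2}} = χ_{E_1}·χ_{E_{k+1}} − χ_{E_k}`,
with `χ_{E_0} = 1` and `χ_{E_1}(g) = tr(g)`. -/
noncomputable def chiESU : ℕ → SL2C → ℂ
  | 0, _ => 1
  | 1, g => Matrix.trace ((g : SL2C) : Matrix (Fin 2) (Fin 2) ℂ)
  | (k + 2), g => Matrix.trace ((g : SL2C) : Matrix (Fin 2) (Fin 2) ℂ) * chiESU (k + 1) g
      - chiESU k g

/-- The character inner product `(1/#Γ) Σ_{g∈Γ} f(g) conj(h(g))` on a finite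
subgroup `Γ` of `SU(2)`. -/
noncomputable def pairSU (Γ : Subgroup SL2C) [Fintype Γ] (f h : Γ → ℂ) : ℂ :=
  (Fintype.card Γ : ℂ)⁻¹ * ∑ g : Γ, f g * (starRingEnd ℂ) (h g)

/-- The character of a representation `α` of a subgroup `Γ ⊂ SU(2)`. -/
noncomputable def chiRepSU {Γ : Subgroup SL2C} {V : Type*} [AddCommGroup V] [Module ℂ V]
    (α : Representation ℂ Γ V) : Γ → ℂ :=
  fun g => LinearMap.trace ℂ V (α g)

namespace BT

lemma chi_zero (g : SL2C) : chiESU 0 g = 1 := rfl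
lemma chi_one (g : SL2C) : chiESU 1 g = Matrix.trace (g : Matrix (Fin 2) (Fin 2) ℂ) := rfl
lemma chi_add_two (k : ℕ) (g : SL2C) :
    chiESU (k + 2) g = Matrix.trace (g : Matrix (Fin 2) (Fin 2) ℂ) * chiESU (k + 1) g
      - chiESU k g := rfl

lemma CH2 (M : Matrix (Fin 2) (Fin 2) ℂ) (h : M.det = 1) :
    M * M = M.trace • M - 1 := by
  rw [Matrix.det_fin_two] at h
  ext i j
  fin_cases i <;> fin_cases j <;>
    simp [Matrix.mul_apply, Fin.sum_univ_two, Matrix.trace_fin_two, Matrix.one_apply] <;>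
    first
      | linear_combination h
      | linear_combination -h
      | ring

lemma invol2 (M : Matrix (Fin 2) (Fin 2) ℂ) (hdet : M.det = 1) (h : M * M = 1) :
    M = 1 ∨ M = -1 := by
  have hCH := CH2 M hdet
  rw [h] at hCH
  have h2 : M.trace • M = 1 + 1 := by
    rw [eq_comm, sub_eq_iff_eq_add] at hCH
    rw [hCH]
  have e00 : M.trace * M 0 0 = 2 := by
    have := congrFun (congrFun h2 0) 0
    simp [Matrix.smul_apply, Matrix.one_apply] at this
    linear_combination this
  have e01 : M.trace * M 0 1 = 0 := by
    have := congrFun (congrFun h2 0) 1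
    simpa [Matrix.smul_apply, Matrix.one_apply] using this
  have e10 : M.trace * M 1 0 = 0 := by
    have := congrFun (congrFun h2 1) 0
    simpa [Matrix.smul_apply, Matrix.one_apply] using this
  have e11 : M.trace * M 1 1 = 2 := by
    have := congrFun (congrFun h2 1) 1
    simp [Matrix.smul_apply, Matrix.one_apply] at this
    linear_combination this
  have ht : M.trace ≠ 0 := by
    intro h0; rw [h0, zero_mul] at e00; norm_num at e00
  have h01 : M 0 1 = 0 := (mul_eq_zero.1 e01).resolve_left ht
  have h10 : M 1 0 = 0 := (mul_eq_zero.1 e10).resolve_left ht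
  have hdiag : M 0 0 = M 1 1 := by
    have := e00.trans e11.symm
    exact mul_left_cancel₀ ht this
  rw [Matrix.det_fin_two, h01, h10, ← hdiag] at hdet
  have : M 0 0 * M 0 0 = 1 := by linear_combination hdet
  rcases mul_self_eq_one_iff.1 this with h1 | h1
  · left; ext i j; fin_cases i <;> fin_cases j <;>
      simp [Matrix.one_apply, h01, h10, h1, ← hdiag]
  · right; ext i j; fin_cases i <;> fin_cases j <;>
      simp [Matrix.one_apply, h01, h10, h1, ← hdiag]

lemma nilp_pow (N : Matrix (Fin 2) (Fin 2) ℂ) (h : N * N = 0) (n : ℕ) :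
    (1 + N) ^ n = 1 + (n : ℂ) • N := by
  induction n with
  | zero => simp
  | succ n ih =>
    rw [pow_succ, ih]
    have hs : ((n : ℂ) • N) * N = 0 := by rw [Matrix.smul_mul, h, smul_zero]
    rw [add_mul, one_mul, mul_add, mul_one, hs, add_zero]
    push_cast
    rw [add_smul, one_smul]
    abel

lemma chi_mat (g : SL2C) : ∀ k : ℕ,
    chiESU (k+1) g • (g : Matrix (Fin 2) (Fin 2) ℂ) - chiESU k g • 1
      = (g : Matrix (Fin 2) (Fin 2) ℂ) ^ (k+2) := by
  have hdet : (g : Matrix (Fin 2) (Fin 2) ℂ).det = 1 := g.2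
  have hCH := CH2 _ hdet
  intro k
  induction k with
  | zero =>
    rw [chi_one, chi_zero, one_smul, pow_two, hCH]
  | succ k ih =>
    have : (g : Matrix (Fin 2) (Fin 2) ℂ) ^ (k + 3)
        = (g : Matrix (Fin 2) (Fin 2) ℂ) * (g : Matrix (Fin 2) (Fin 2) ℂ) ^ (k+2) := by
      rw [← pow_succ']
    rw [show k + 1 + 2 = k + 3 from rfl, this, ← ih]
    rw [mul_sub, Matrix.mul_smul, Matrix.mul_smul, mul_one, ← pow_two, pow_two, hCH,
      chi_add_two, smul_sub, sub_smul, mul_smul]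
    module


lemma chi_sum_rec (g : SL2C) (n : ℕ) :
    (Matrix.trace (g : Matrix (Fin 2) (Fin 2) ℂ) - 2) * (∑ k ∈ Finset.range (n+1), chiESU k g)
      = chiESU (n+1) g - chiESU n g - 1 := by
  induction n with
  | zero =>
    simp [chi_zero, chi_one]
    ring
  | succ n ih =>
    rw [Finset.sum_range_succ, show n+1+1 = n+2 from rfl, chi_add_two]
    linear_combination ih

lemma vanish (g : SL2C) (h12 : (g : Matrix (Fin 2) (Fin 2) ℂ) ^ 12 = 1)
    (h1 : (g : Matrix (Fin 2) (Fin 2) ℂ) ≠ 1)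
    (hm1 : (g : Matrix (Fin 2) (Fin 2) ℂ) ≠ -1) :
    (∑ k ∈ Finset.range 12, chiESU k g) = 0 ∧
    (∑ k ∈ Finset.range 12, chiESU (k+1) g) = 0 := by
  set M : Matrix (Fin 2) (Fin 2) ℂ := (g : Matrix (Fin 2) (Fin 2) ℂ) with hM
  have hdet : M.det = 1 := g.2
  have hkey : chiESU 11 g • M - chiESU 10 g • 1 = 1 := by
    have h := chi_mat g 10
    rw [show (10:ℕ)+1 = 11 from rfl, show (10:ℕ)+2 = 12 from rfl] at h
    rw [h]
    exact h12
  have h11 : chiESU 11 g = 0 := by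
    by_contra hne
    have h' : chiESU 11 g • M = 1 + chiESU 10 g • (1 : Matrix (Fin 2) (Fin 2) ℂ) :=
      sub_eq_iff_eq_add.mp hkey
    have hMs : M = ((chiESU 11 g)⁻¹ * (1 + chiESU 10 g)) • (1 : Matrix (Fin 2) (Fin 2) ℂ) := by
      calc M = (chiESU 11 g)⁻¹ • (chiESU 11 g • M) := by
              rw [smul_smul, inv_mul_cancel₀ hne, one_smul]
        _ = (chiESU 11 g)⁻¹ • ((1 : Matrix (Fin 2) (Fin 2) ℂ) + chiESU 10 g • 1) := by rw [h']
        _ = ((chiESU 11 g)⁻¹ * (1 + chiESU 10 g)) • (1 : Matrix (Fin 2) (Fin 2) ℂ) := by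
              rw [show (1 : Matrix (Fin 2) (Fin 2) ℂ) + chiESU 10 g • 1
                  = (1 + chiESU 10 g) • (1 : Matrix (Fin 2) (Fin 2) ℂ) by
                    rw [add_smul, one_smul], smul_smul]
    set c : ℂ := (chiESU 11 g)⁻¹ * (1 + chiESU 10 g) with hc
    have hc2 : c * c = 1 := by
      have hd := hdet
      rw [hMs, Matrix.det_smul, Matrix.det_one, mul_one, Fintype.card_fin, pow_two] at hd
      exact hd
    rcases mul_self_eq_one_iff.1 hc2 with hc1 | hc1
    · rw [hc1, one_smul] at hMs; exact h1 hMs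
    · rw [hc1, neg_smul, one_smul] at hMs; exact hm1 hMs
  have h10 : chiESU 10 g = -1 := by
    rw [h11, zero_smul, zero_sub] at hkey
    have h := congrFun (congrFun hkey 0) 0
    simp [Matrix.neg_apply, Matrix.smul_apply, Matrix.one_apply] at h
    linear_combination -h
  have h12chi : chiESU 12 g = 1 := by
    rw [show (12:ℕ) = 10 + 2 from rfl, chi_add_two, show (10:ℕ)+1 = 11 from rfl, h11, h10]
    ring
  have htr : M.trace ≠ 2 := by
    intro ht
    have hCH := CH2 M hdet
    rw [ht] at hCH
    have hNN : (M - 1) * (M - 1) = 0 := by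
      have hexp : (M - 1) * (M - 1) = M * M - M - M + 1 := by noncomm_ring
      rw [hexp, hCH]
      have : (2:ℂ) • M = M + M := by rw [two_smul]
      rw [this]
      abel
    have hM1 : M = 1 + (M - 1) := by abel
    have h12' := h12
    rw [hM1, nilp_pow (M - 1) hNN 12] at h12'
    have hN0 : ((12:ℕ) : ℂ) • (M - 1) = 0 := by
      have := h12'
      rwa [add_eq_left] at this
    have hN : M - 1 = 0 := by
      have h12ne : ((12:ℕ) : ℂ) ≠ 0 := by norm_num
      exact (smul_eq_zero.mp hN0).resolve_left h12ne
    apply h1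
    rw [hM1, hN, add_zero]
  have hsum1 : (∑ k ∈ Finset.range 12, chiESU k g) = 0 := by
    have hrec := chi_sum_rec g 11
    rw [show (11:ℕ)+1 = 12 from rfl, h12chi, h11] at hrec
    norm_num at hrec
    rcases hrec with h | h
    · exact absurd (sub_eq_zero.mp h) htr
    · exact h
  refine ⟨hsum1, ?_⟩
  have h13 : (∑ k ∈ Finset.range 13, chiESU k g) = 1 := by
    rw [Finset.sum_range_succ, hsum1, zero_add]
    exact h12chi
  have h13' := Finset.sum_range_succ' (fun k => chiESU k g) 12
  rw [h13, chi_zero] at h13'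
  linear_combination h13'.symm

lemma chi_at_tr2 (g : SL2C) (h2 : Matrix.trace (g : Matrix (Fin 2) (Fin 2) ℂ) = 2) :
    ∀ k : ℕ, chiESU k g = (k + 1 : ℂ) := by
  have key : ∀ k : ℕ, chiESU k g = (k+1:ℂ) ∧ chiESU (k+1) g = ((k:ℂ)+2) := by
    intro k
    induction k with
    | zero =>
      constructor
      · rw [chi_zero]; norm_num
      · rw [chi_one, h2]; norm_num
    | succ k ih =>
      refine ⟨by rw [ih.2]; push_cast; ring, ?_⟩
      rw [show k+1+1 = k+2 from rfl, chi_add_two, h2, ih.2, ih.1]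
      push_cast; ring
  exact fun k => (key k).1

lemma chi_at_trm2 (g : SL2C) (h2 : Matrix.trace (g : Matrix (Fin 2) (Fin 2) ℂ) = -2) :
    ∀ k : ℕ, chiESU k g = (-1)^k * (k + 1 : ℂ) := by
  have key : ∀ k : ℕ, chiESU k g = (-1)^k * (k+1:ℂ) ∧
      chiESU (k+1) g = (-1)^(k+1) * ((k:ℂ)+2) := by
    intro k
    induction k with
    | zero =>
      constructor
      · rw [chi_zero]; norm_num
      · rw [chi_one, h2]; norm_num
    | succ k ih =>
      refine ⟨by rw [ih.2]; push_cast; ring, ?_⟩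
      rw [show k+1+1 = k+2 from rfl, chi_add_two, h2, ih.2, ih.1]
      push_cast; ring
  exact fun k => (key k).1

lemma sums_tr2 (g : SL2C) (h2 : Matrix.trace (g : Matrix (Fin 2) (Fin 2) ℂ) = 2) :
    (∑ k ∈ Finset.range 12, chiESU k g) = 78 ∧
    (∑ k ∈ Finset.range 12, chiESU (k+1) g) = 90 := by
  have h := chi_at_tr2 g h2
  constructor
  · rw [Finset.sum_congr rfl (fun k _ => h k)]
    simp [Finset.sum_range_succ]
    norm_num
  · rw [Finset.sum_congr rfl (fun k _ => h (k+1))]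
    simp [Finset.sum_range_succ]
    norm_num

lemma sums_trm2 (g : SL2C) (h2 : Matrix.trace (g : Matrix (Fin 2) (Fin 2) ℂ) = -2) :
    (∑ k ∈ Finset.range 12, chiESU k g) = -6 ∧
    (∑ k ∈ Finset.range 12, chiESU (k+1) g) = 6 := by
  have h := chi_at_trm2 g h2
  constructor
  · rw [Finset.sum_congr rfl (fun k _ => h k)]
    simp [Finset.sum_range_succ]
    norm_num
  · rw [Finset.sum_congr rfl (fun k _ => h (k+1))]
    simp [Finset.sum_range_succ]
    norm_num

lemma bridge (f : ℕ → ℂ) :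
    ∑ m ∈ Finset.Icc 1 12, f (m-1) = ∑ k ∈ Finset.range 12, f k := by
  rw [show Finset.Icc 1 12 = Finset.image Nat.succ (Finset.range 12) from by decide]
  rw [Finset.sum_image (by intro x _ y _ h; exact Nat.succ_injective h)]
  simp


abbrev S3 := Matrix.SpecialLinearGroup (Fin 2) (ZMod 3)

instance : DecidableEq S3 := fun a b =>
  decidable_of_iff (a.1 = b.1) Subtype.ext_iff.symm

def im : S3 := ⟨!![0, -1; 1, 0], by decide⟩
def jm : S3 := ⟨!![1, 1; 1, -1], by decide⟩
def tm : S3 := ⟨!![1, 1; 0, 1], by decide⟩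

lemma sf1 : (im * im) * (im * im) = 1 := by decide
lemma sf2 : im * im ≠ 1 := by decide
lemma sf3 : jm * jm = im * im := by decide
lemma sf4 : im * jm = (im * im) * (jm * im) := by decide
lemma sf5 : tm * (tm * tm) = 1 := by decide
lemma sf6 : tm * im = jm * tm := by decide
lemma sf7 : tm * jm = im * (jm * tm) := by decide

set_option linter.unusedSectionVars false in
set_option maxRecDepth 10000 in
lemma decompS3 : ∀ g : S3, ∃ a : Fin 4, ∃ b : Fin 2, ∃ k : Fin 3,
    g = im ^ (a : ℕ) * jm ^ (b : ℕ) * tm ^ (k : ℕ) := by decide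

section Helpers

variable {V : Type*} [AddCommGroup V] [Module ℂ V]

lemma span_stab (f : V →ₗ[ℂ] V) (s : Set V)
    (h : ∀ x ∈ s, f x ∈ Submodule.span ℂ s) :
    ∀ u ∈ Submodule.span ℂ s, f u ∈ Submodule.span ℂ s := by
  intro u hu
  induction hu using Submodule.span_induction with
  | mem x hx => exact h x hx
  | zero => rw [map_zero]; exact Submodule.zero_mem _
  | add x y _ _ hx hy => rw [map_add]; exact Submodule.add_mem _ hx hy
  | smul c x _ hx => rw [map_smul]; exact Submodule.smul_mem _ c hx

set_option linter.unusedSectionVars false in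
lemma range_pair (x y : V) : Set.range ![x, y] = {x, y} := by
  ext u
  simp [Fin.exists_fin_two]
  tauto

set_option linter.unusedSectionVars false in
lemma range_triple (x y z : V) : Set.range ![x, y, z] = {x, y, z} := by
  ext u
  constructor
  · rintro ⟨i, rfl⟩
    fin_cases i <;> simp
  · intro h
    rcases h with h | h | h
    · exact ⟨0, h.symm⟩
    · exact ⟨1, h.symm⟩
    · exact ⟨2, h.symm⟩

lemma finrank_le_pair [FiniteDimensional ℂ V] (x y : V)
    (h : Submodule.span ℂ {x, y} = ⊤) : Module.finrank ℂ V ≤ 2 := by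
  have h1 : Module.finrank ℂ V = Module.finrank ℂ (Submodule.span ℂ (Set.range ![x, y])) := by
    rw [range_pair, h, finrank_top]
  rw [h1]
  simpa [Set.finrank] using finrank_range_le_card (R := ℂ) ![x, y]

lemma finrank_le_triple [FiniteDimensional ℂ V] (x y z : V)
    (h : Submodule.span ℂ {x, y, z} = ⊤) : Module.finrank ℂ V ≤ 3 := by
  have h1 : Module.finrank ℂ V
      = Module.finrank ℂ (Submodule.span ℂ (Set.range ![x, y, z])) := by
    rw [range_triple, h, finrank_top]
  rw [h1]
  simpa [Set.finrank] using finrank_range_le_card (R := ℂ) ![x, y, z]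

end Helpers

end BT

set_option synthInstance.maxHeartbeats 400000 in
set_option maxHeartbeats 1600000 in
/-- Let `Γ` be the binary tetrahedral group (the finite subgroup of
`SU(2)` of order 24 and exponent 12, isomorphic to `SL(2,3)`), whose irreducible
characters `χ₁,…,χ₇` have dimensions `1,1,1,2,2,2,3`.  Then
`Σ_{m=1}^{12} ⟨χ_{E_{m-1}}, χ_α⟩_Γ` equals `3` for the 1-dimensional irreducibles,
`7` for the 2-dimensional ones and `9` for the 3-dimensional one, while
`Σ_{m=0}^{11} ⟨χ_{E_{m+1}}, χ_α⟩_Γ` equals `4`, `7`, `12` respectively. -/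
theorem binary_tetrahedral_beta_gamma_sums
    (Γ : Subgroup SL2C) [Fintype Γ] (hsu : IsSU2Subgroup Γ)
    (hcard : Fintype.card Γ = 24) (hexp : Monoid.exponent Γ = 12)
    (hiso : Nonempty (Γ ≃* Matrix.SpecialLinearGroup (Fin 2) (ZMod 3)))
    {V : Type*} [AddCommGroup V] [Module ℂ V] [FiniteDimensional ℂ V] [Nontrivial V]
    (α : Representation ℂ Γ V)
    (hirr : ∀ W : Submodule ℂ V, (∀ (g : Γ), ∀ w ∈ W, α g w ∈ W) → W = ⊥ ∨ W = ⊤) :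
    (∑ m ∈ Finset.Icc 1 12, pairSU Γ (fun g => chiESU (m - 1) g) (chiRepSU α)
      = if Module.finrank ℂ V = 1 then 3 else if Module.finrank ℂ V = 2 then 7 else 9)
    ∧ (∑ m ∈ Finset.range 12, pairSU Γ (fun g => chiESU (m + 1) g) (chiRepSU α)
      = if Module.finrank ℂ V = 1 then 4 else if Module.finrank ℂ V = 2 then 7 else 12) := by
  classical
  obtain ⟨iso⟩ := hiso
  set φ : BT.S3 ≃* Γ := iso.symm with hφdef
  set I' : Γ := φ BT.im with hI'
  set J' : Γ := φ BT.jm with hJ'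
  set T' : Γ := φ BT.tm with hT'
  set ε : Γ := φ (BT.im * BT.im) with hε
  -- transferred group facts
  have hε2 : ε * ε = 1 := by
    rw [hε, ← map_mul, BT.sf1, map_one]
  have hεne1 : ε ≠ 1 := by
    intro h
    exact BT.sf2 (φ.injective (by rw [← hε, h, map_one]))
  have hII : I' * I' = ε := by rw [hI', hε, ← map_mul]
  have hJJ : J' * J' = ε := by rw [hJ', hε, ← map_mul, BT.sf3]
  have hIJ : I' * J' = ε * (J' * I') := by
    rw [hI', hJ', hε, ← map_mul, ← map_mul, ← map_mul, BT.sf4]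
  have hT3 : T' * (T' * T') = 1 := by
    rw [hT', ← map_mul, ← map_mul, BT.sf5, map_one]
  have hTI : T' * I' = J' * T' := by
    rw [hT', hI', hJ', ← map_mul, ← map_mul, BT.sf6]
  have hTJ : T' * J' = I' * (J' * T') := by
    rw [hT', hI', hJ', ← map_mul, ← map_mul, ← map_mul, BT.sf7]
  have hdecΓ : ∀ γ : Γ, ∃ a : Fin 4, ∃ b : Fin 2, ∃ k : Fin 3,
      γ = I' ^ (a:ℕ) * J' ^ (b:ℕ) * T' ^ (k:ℕ) := by
    intro γ
    obtain ⟨a, b, k, h⟩ := BT.decompS3 (φ.symm γ)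
    refine ⟨a, b, k, ?_⟩
    have h2 := congrArg φ h
    rwa [MulEquiv.apply_symm_apply, map_mul, map_mul, map_pow, map_pow, map_pow] at h2
  -- matrix-level facts
  have hmatinj : ∀ γ δ : Γ,
      ((γ : SL2C) : Matrix (Fin 2) (Fin 2) ℂ) = ((δ : SL2C) : Matrix (Fin 2) (Fin 2) ℂ)
        → γ = δ := by
    intro γ δ h
    exact Subtype.ext (Subtype.ext h)
  have hεmat : ((ε : SL2C) : Matrix (Fin 2) (Fin 2) ℂ) = -1 := by
    have hmm : ((ε : SL2C) : Matrix (Fin 2) (Fin 2) ℂ)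
        * ((ε : SL2C) : Matrix (Fin 2) (Fin 2) ℂ) = 1 := by
      have h1 : ((ε * ε : Γ) : SL2C) = 1 := by rw [hε2]; rfl
      have h2 := congrArg (fun x : SL2C => (x : Matrix (Fin 2) (Fin 2) ℂ)) h1
      simpa using h2
    rcases BT.invol2 _ (ε : SL2C).2 hmm with h | h
    · exact absurd (hmatinj ε 1 (by rw [h]; simp)) hεne1
    · exact h
  have h1ε : (1 : Γ) ≠ ε := fun h => hεne1 h.symm
  have hεcent : ∀ γ : Γ, ε * γ = γ * ε := by
    intro γ
    apply hmatinj
    show ((↑(ε * γ) : SL2C) : Matrix (Fin 2) (Fin 2) ℂ)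
        = ((↑(γ * ε) : SL2C) : Matrix (Fin 2) (Fin 2) ℂ)
    rw [MulMemClass.coe_mul, MulMemClass.coe_mul, Matrix.SpecialLinearGroup.coe_mul,
      Matrix.SpecialLinearGroup.coe_mul, hεmat, neg_one_mul, mul_neg_one]
  -- the two key sums, in terms of character values at 1 and ε
  have hg12 : ∀ γ : Γ, ((γ : SL2C) : Matrix (Fin 2) (Fin 2) ℂ) ^ 12 = 1 := by
    intro γ
    have h := Monoid.pow_exponent_eq_one γ
    rw [hexp] at h
    have h2 : ((γ ^ 12 : Γ) : SL2C) = 1 := by rw [h]; rfl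
    have h3 : ((γ : SL2C) ^ 12 : SL2C) = 1 := by
      rw [← h2]; push_cast; ring
    have h4 := congrArg (fun x : SL2C => (x : Matrix (Fin 2) (Fin 2) ℂ)) h3
    simpa using h4
  have hvan : ∀ γ : Γ, γ ≠ 1 → γ ≠ ε →
      (∑ k ∈ Finset.range 12, chiESU k (γ : SL2C)) = 0 ∧
      (∑ k ∈ Finset.range 12, chiESU (k+1) (γ : SL2C)) = 0 := by
    intro γ hne1 hneε
    apply BT.vanish _ (hg12 γ)
    · intro h
      exact hne1 (hmatinj γ 1 (by rw [h]; simp))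
    · intro h
      exact hneε (hmatinj γ ε (by rw [h, hεmat]))
  have htr1 : Matrix.trace (((1 : Γ) : SL2C) : Matrix (Fin 2) (Fin 2) ℂ) = 2 := by
    simp [Matrix.trace_one]
  have htrε : Matrix.trace ((ε : SL2C) : Matrix (Fin 2) (Fin 2) ℂ) = -2 := by
    rw [hεmat]
    simp [Matrix.trace_fin_two]
  have hmain : ∀ x y : ℂ, chiRepSU α 1 = x → chiRepSU α ε = y →
      ((∑ m ∈ Finset.Icc 1 12, pairSU Γ (fun g => chiESU (m - 1) g) (chiRepSU α))
          = (24:ℂ)⁻¹ * (78 * (starRingEnd ℂ) x + (-6) * (starRingEnd ℂ) y))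
      ∧ ((∑ m ∈ Finset.range 12, pairSU Γ (fun g => chiESU (m + 1) g) (chiRepSU α))
          = (24:ℂ)⁻¹ * (90 * (starRingEnd ℂ) x + 6 * (starRingEnd ℂ) y)) := by
    intro x y hx hy
    have hsplit : ∀ F : ℕ → SL2C → ℂ,
        (∀ γ : Γ, γ ≠ 1 → γ ≠ ε → (∑ k ∈ Finset.range 12, F k (γ : SL2C)) = 0) →
        (∑ γ : Γ, (∑ k ∈ Finset.range 12, F k (γ : SL2C)) * (starRingEnd ℂ) (chiRepSU α γ))
          = (∑ k ∈ Finset.range 12, F k ((1:Γ) : SL2C)) * (starRingEnd ℂ) x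
            + (∑ k ∈ Finset.range 12, F k ((ε:Γ) : SL2C)) * (starRingEnd ℂ) y := by
      intro F hF
      rw [← Finset.sum_subset (Finset.subset_univ ({1, ε} : Finset Γ))]
      · rw [Finset.sum_pair h1ε, hx, hy]
      · intro γ _ hγ
        simp only [Finset.mem_insert, Finset.mem_singleton] at hγ
        push_neg at hγ
        rw [hF γ hγ.1 hγ.2, zero_mul]
    constructor
    · have step1 : (∑ m ∈ Finset.Icc 1 12, pairSU Γ (fun g => chiESU (m - 1) g) (chiRepSU α))
          = (Fintype.card Γ : ℂ)⁻¹ * ∑ γ : Γ,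
              (∑ k ∈ Finset.range 12, chiESU k (γ : SL2C)) * (starRingEnd ℂ) (chiRepSU α γ) := by
        simp only [pairSU]
        rw [← Finset.mul_sum, Finset.sum_comm]
        congr 1
        refine Finset.sum_congr rfl (fun γ _ => ?_)
        rw [← Finset.sum_mul, BT.bridge (fun k => chiESU k (γ : SL2C))]
      rw [step1, hsplit (fun k g => chiESU k g) (fun γ h1 h2 => (hvan γ h1 h2).1), hcard]
      rw [(BT.sums_tr2 _ htr1).1, (BT.sums_trm2 _ htrε).1]
      norm_num
    · have step1 : (∑ m ∈ Finset.range 12, pairSU Γ (fun g => chiESU (m + 1) g) (chiRepSU α))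
          = (Fintype.card Γ : ℂ)⁻¹ * ∑ γ : Γ,
              (∑ k ∈ Finset.range 12, chiESU (k+1) (γ : SL2C)) * (starRingEnd ℂ) (chiRepSU α γ) := by
        simp only [pairSU]
        rw [← Finset.mul_sum, Finset.sum_comm]
        congr 1
        refine Finset.sum_congr rfl (fun γ _ => ?_)
        rw [← Finset.sum_mul]
      rw [step1, hsplit (fun k g => chiESU (k+1) g) (fun γ h1 h2 => (hvan γ h1 h2).2), hcard]
      rw [(BT.sums_tr2 _ htr1).2, (BT.sums_trm2 _ htrε).2]
      norm_num
  have hχ1 : chiRepSU α 1 = (Module.finrank ℂ V : ℂ) := by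
    show LinearMap.trace ℂ V (α 1) = _
    rw [map_one, LinearMap.trace_one]
  have htri : (Module.finrank ℂ V = 1 ∧ chiRepSU α ε = 1)
      ∨ (Module.finrank ℂ V = 2 ∧ chiRepSU α ε = -2)
      ∨ (Module.finrank ℂ V = 3 ∧ chiRepSU α ε = 3) := by
    -- pointwise relations for the representation
    have rII : ∀ v : V, α I' (α I' v) = α ε v := by
      intro v
      have h : α I' * α I' = α ε := by rw [← map_mul α, hII]
      have h2 := congrArg (fun f : Module.End ℂ V => f v) h
      simpa using h2
    have rJJ : ∀ v : V, α J' (α J' v) = α ε v := by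
      intro v
      have h : α J' * α J' = α ε := by rw [← map_mul α, hJJ]
      have h2 := congrArg (fun f : Module.End ℂ V => f v) h
      simpa using h2
    have rIJ : ∀ v : V, α I' (α J' v) = α ε (α J' (α I' v)) := by
      intro v
      have h : α I' * α J' = α ε * (α J' * α I') := by
        rw [← map_mul α, ← map_mul α, ← map_mul α, hIJ]
      have h2 := congrArg (fun f : Module.End ℂ V => f v) h
      simpa using h2
    have rT3 : ∀ v : V, α T' (α T' (α T' v)) = v := by
      intro v
      have h : α T' * (α T' * α T') = 1 := by rw [← map_mul α, ← map_mul α, hT3, map_one]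
      have h2 := congrArg (fun f : Module.End ℂ V => f v) h
      simpa using h2
    have rTI : ∀ v : V, α T' (α I' v) = α J' (α T' v) := by
      intro v
      have h : α T' * α I' = α J' * α T' := by rw [← map_mul α, ← map_mul α, hTI]
      have h2 := congrArg (fun f : Module.End ℂ V => f v) h
      simpa using h2
    have rTJ : ∀ v : V, α T' (α J' v) = α I' (α J' (α T' v)) := by
      intro v
      have h : α T' * α J' = α I' * (α J' * α T') := by
        rw [← map_mul α, ← map_mul α, ← map_mul α, hTJ]
      have h2 := congrArg (fun f : Module.End ℂ V => f v) h
      simpa using h2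
    have rP2 : ∀ v : V, α ε (α ε v) = v := by
      intro v
      have h : α ε * α ε = 1 := by rw [← map_mul α, hε2, map_one]
      have h2 := congrArg (fun f : Module.End ℂ V => f v) h
      simpa using h2
    have hCinj : Function.Injective (α T') := by
      intro u v h
      have h2 := congrArg (α T') (congrArg (α T') h)
      rwa [rT3, rT3] at h2
    have hpow : ∀ (f : Module.End ℂ V) (W : Submodule ℂ V), (∀ w ∈ W, f w ∈ W) →
        ∀ (n : ℕ), ∀ w ∈ W, (f ^ n) w ∈ W := by
      intro f W hf n
      induction n with
      | zero => intro w hw; simpa using hw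
      | succ n ih =>
        intro w hw
        rw [pow_succ, Module.End.mul_apply]
        exact ih _ (hf w hw)
    have hstab : ∀ (W : Submodule ℂ V), (∀ w ∈ W, α I' w ∈ W) → (∀ w ∈ W, α J' w ∈ W) →
        (∀ w ∈ W, α T' w ∈ W) → ∀ (γ : Γ), ∀ w ∈ W, α γ w ∈ W := by
      intro W hA hB hC γ w hw
      obtain ⟨a, b, k, rfl⟩ := hdecΓ γ
      rw [map_mul, map_mul, map_pow, map_pow, map_pow, Module.End.mul_apply,
        Module.End.mul_apply]
      exact hpow _ _ hA _ _ (hpow _ _ hB _ _ (hpow _ _ hC _ _ hw))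
    -- the central element acts as ±1
    have hPd : (∀ v : V, α ε v = v) ∨ (∀ v : V, α ε v = -v) := by
      by_cases hP1 : ∀ v : V, α ε v = v
      · exact Or.inl hP1
      · right
        push_neg at hP1
        obtain ⟨v₀, hv₀⟩ := hP1
        set W : Submodule ℂ V := LinearMap.ker (α ε - LinearMap.id) with hW
        have hmemW : ∀ x : V, x ∈ W ↔ α ε x = x := by
          intro x
          rw [hW, LinearMap.mem_ker, LinearMap.sub_apply, LinearMap.id_apply, sub_eq_zero]
        have hWstab : ∀ (γ : Γ), ∀ x ∈ W, α γ x ∈ W := by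
          intro γ x hx
          rw [hmemW] at hx ⊢
          have hcomm : α ε (α γ x) = α γ (α ε x) := by
            have h : α ε * α γ = α γ * α ε := by rw [← map_mul α, ← map_mul α, hεcent]
            have h2 := congrArg (fun f : Module.End ℂ V => f x) h
            simpa using h2
          rw [hcomm, hx]
        rcases hirr W hWstab with hbot | htop
        · intro v
          have hv : v + α ε v ∈ W := by
            rw [hmemW, map_add, rP2]
            abel
          rw [hbot, Submodule.mem_bot] at hv
          have : α ε v = -v + (v + α ε v) := by abel
          rw [hv, add_zero] at this
          exact this
        · exact absurd ((hmemW v₀).mp (htop ▸ Submodule.mem_top)) hv₀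
    rcases hPd with hP1 | hPm
    · -- α ε = 1 : dimension is 1 or 3
      have hy1 : chiRepSU α ε = (Module.finrank ℂ V : ℂ) := by
        have hid : α ε = 1 := by ext v; simpa using hP1 v
        show LinearMap.trace ℂ V (α ε) = _
        rw [hid, LinearMap.trace_one]
      have pA2 : ∀ v : V, α I' (α I' v) = v := fun v => by rw [rII, hP1]
      have pB2 : ∀ v : V, α J' (α J' v) = v := fun v => by rw [rJJ, hP1]
      have pBA : ∀ v : V, α J' (α I' v) = α I' (α J' v) := fun v => by rw [rIJ, hP1]
      by_cases hA1 : ∀ v : V, α I' v = v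
      · -- dimension 1
        left
        obtain ⟨μ, hμ⟩ := Module.End.exists_eigenvalue (α T' : Module.End ℂ V)
        obtain ⟨w, hw⟩ := hμ.exists_hasEigenvector
        have hCw : α T' w = μ • w := hw.apply_eq_smul
        have hw0 : w ≠ 0 := hw.2
        have hstabW : ∀ (γ : Γ), ∀ u ∈ Submodule.span ℂ ({w} : Set V),
            α γ u ∈ Submodule.span ℂ ({w} : Set V) := by
          apply hstab
          · intro u hu; rw [hA1]; exact hu
          · intro u hu
            have hB1 : α J' u = u := by
              have h := rTI (α T' (α T' u))
              rw [hA1 (α T' (α T' u)), rT3 u] at h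
              exact h.symm
            rw [hB1]; exact hu
          · intro u hu
            rw [Submodule.mem_span_singleton] at hu
            obtain ⟨c, rfl⟩ := hu
            rw [map_smul, hCw]
            exact Submodule.smul_mem _ _
              (Submodule.smul_mem _ _ (Submodule.mem_span_singleton_self w))
        rcases hirr _ hstabW with hbot | htop
        · exfalso
          have hmem : w ∈ (⊥ : Submodule ℂ V) := hbot ▸ Submodule.mem_span_singleton_self w
          exact hw0 ((Submodule.mem_bot ℂ).mp hmem)
        · have hd : Module.finrank ℂ V = 1 := by
            have h := finrank_span_singleton (K := ℂ) hw0
            rw [htop, finrank_top] at h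
            exact h
          exact ⟨hd, by rw [hy1, hd]; norm_num⟩
      · push_neg at hA1
        obtain ⟨v₁, hv₁⟩ := hA1
        -- eigenvalue of s = A + B + AB
        set s : Module.End ℂ V := α I' + α J' + α I' * α J' with hs
        have hsv : ∀ v : V, s v = α I' v + α J' v + α I' (α J' v) := by
          intro v
          simp [hs, LinearMap.add_apply, Module.End.mul_apply]
        have hsA : ∀ v : V, s (α I' v) = α I' (s v) := by
          intro v
          simp only [hsv, map_add, pA2, pBA]
          all_goals abel
        have hsB : ∀ v : V, s (α J' v) = α J' (s v) := by
          intro v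
          simp only [hsv, map_add, pA2, pB2, pBA]
          all_goals abel
        have hsC : ∀ v : V, s (α T' v) = α T' (s v) := by
          intro v
          simp only [hsv, map_add, rTI, rTJ, pBA, pB2]
          all_goals abel
        obtain ⟨lam, hlam'⟩ := Module.End.exists_eigenvalue (s : Module.End ℂ V)
        obtain ⟨w', hw'⟩ := hlam'.exists_hasEigenvector
        have hslam : ∀ v : V, s v = lam • v := by
          have hstabK : ∀ (γ : Γ), ∀ x ∈ Module.End.eigenspace s lam,
              α γ x ∈ Module.End.eigenspace s lam := by
            apply hstab
            · intro x hx
              rw [Module.End.mem_eigenspace_iff] at hx ⊢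
              rw [hsA, hx, map_smul]
            · intro x hx
              rw [Module.End.mem_eigenspace_iff] at hx ⊢
              rw [hsB, hx, map_smul]
            · intro x hx
              rw [Module.End.mem_eigenspace_iff] at hx ⊢
              rw [hsC, hx, map_smul]
          rcases hirr _ hstabK with hbot | htop
          · exfalso
            have hmem : w' ∈ (⊥ : Submodule ℂ V) := hbot ▸ hw'.1
            exact hw'.2 ((Submodule.mem_bot ℂ).mp hmem)
          · intro v
            exact Module.End.mem_eigenspace_iff.mp (htop ▸ Submodule.mem_top)
        have hAkey : ∀ v : V, (lam + 1) • (α I' v) = (lam + 1) • v := by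
          intro v
          have h1 : α I' (s v) = s v + v - α I' v := by
            simp only [hsv, map_add, pA2, pBA]
            all_goals abel
          rw [hslam] at h1
          rw [map_smul] at h1
          rw [add_smul, add_smul, one_smul, one_smul, h1]
          abel
        have hlamm1 : lam = -1 := by
          by_contra hne
          have hne0 : lam + 1 ≠ 0 := fun h => hne (by linear_combination h)
          exact hv₁ (smul_right_injective V hne0 (hAkey v₁))
        have hs1 : ∀ v : V, α I' v + α J' v + α I' (α J' v) = -v := by
          intro v
          have h := hslam v
          rw [hlamm1, neg_smul, one_smul] at h
          rw [← hsv, h]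
        by_cases hAm : ∀ v : V, α I' v = -v
        · -- impossible
          exfalso
          have hBm : ∀ v : V, α J' v = -v := by
            intro v
            have h := rTI (α T' (α T' v))
            rw [hAm (α T' (α T' v)), map_neg, rT3 v] at h
            exact h.symm
          obtain ⟨v0, hv0⟩ := exists_ne (0 : V)
          have h := rTJ v0
          rw [hBm v0, map_neg, hBm (α T' v0), map_neg, hAm (α T' v0), neg_neg] at h
          have h2 : α T' v0 + α T' v0 = 0 := by nth_rewrite 1 [← h]; abel
          have h3 : (2 : ℂ) • α T' v0 = 0 := by rw [two_smul]; exact h2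
          have h4 : α T' v0 = 0 := by
            have := smul_eq_zero.mp h3
            rcases this with h' | h'
            · norm_num at h'
            · exact h'
          exact hv0 (hCinj (by rw [h4, map_zero]))
        · push_neg at hAm
          obtain ⟨v₂, hv₂⟩ := hAm
          set wp : V := v₂ + α I' v₂ with hwp
          have hwp0 : wp ≠ 0 := fun h => hv₂ (eq_neg_of_add_eq_zero_right (by rw [← hwp]; exact h))
          have hAwp : α I' wp = wp := by rw [hwp, map_add, pA2]; abel
          set wm : V := v₁ - α I' v₁ with hwm
          have hwm0 : wm ≠ 0 := fun h => hv₁ ((sub_eq_zero.mp (by rw [← hwm]; exact h)).symm)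
          have hAwm : α I' wm = -wm := by rw [hwm, map_sub, pA2, neg_sub]
          -- dimension at most 3
          obtain ⟨μ, hμ⟩ := Module.End.exists_eigenvalue (α T' : Module.End ℂ V)
          obtain ⟨w, hw⟩ := hμ.exists_hasEigenvector
          have hCw : α T' w = μ • w := hw.apply_eq_smul
          have hw0 : w ≠ 0 := hw.2
          have hABw : α I' (α J' w) = -w - α I' w - α J' w := by
            have h := hs1 w
            rw [← h]; abel
          have hm1 : w ∈ Submodule.span ℂ ({w, α I' w, α J' w} : Set V) :=
            Submodule.subset_span (by simp)
          have hm2 : α I' w ∈ Submodule.span ℂ ({w, α I' w, α J' w} : Set V) :=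
            Submodule.subset_span (by simp)
          have hm3 : α J' w ∈ Submodule.span ℂ ({w, α I' w, α J' w} : Set V) :=
            Submodule.subset_span (by simp)
          have hm4 : α I' (α J' w) ∈ Submodule.span ℂ ({w, α I' w, α J' w} : Set V) := by
            rw [hABw]
            exact Submodule.sub_mem _ (Submodule.sub_mem _ (Submodule.neg_mem _ hm1) hm2) hm3
          have hstabW : ∀ (γ : Γ), ∀ u ∈ Submodule.span ℂ ({w, α I' w, α J' w} : Set V),
              α γ u ∈ Submodule.span ℂ ({w, α I' w, α J' w} : Set V) := by
            apply hstab
            · apply BT.span_stab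
              intro x hx
              rcases hx with h | h | h
              · rw [h]; exact hm2
              · rw [h, pA2]; exact hm1
              · rw [h]; exact hm4
            · apply BT.span_stab
              intro x hx
              rcases hx with h | h | h
              · rw [h]; exact hm3
              · rw [h, pBA]; exact hm4
              · rw [h, pB2]; exact hm1
            · apply BT.span_stab
              intro x hx
              rcases hx with h | h | h
              · rw [h, hCw]; exact Submodule.smul_mem _ _ hm1
              · rw [h, rTI, hCw, map_smul]; exact Submodule.smul_mem _ _ hm3
              · rw [h, rTJ, hCw, map_smul, map_smul]; exact Submodule.smul_mem _ _ hm4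
          rcases hirr _ hstabW with hbot | htop
          · exfalso
            have hmem : w ∈ (⊥ : Submodule ℂ V) := hbot ▸ hm1
            exact hw0 ((Submodule.mem_bot ℂ).mp hmem)
          · have hd3 : Module.finrank ℂ V ≤ 3 := BT.finrank_le_triple _ _ _ htop
            have hdne1 : Module.finrank ℂ V ≠ 1 := by
              intro hd1
              obtain ⟨u, hu0, hgen⟩ := finrank_eq_one_iff'.mp hd1
              obtain ⟨a, ha⟩ := hgen (α I' u)
              obtain ⟨b, hb⟩ := hgen (α J' u)
              have hAsc : ∀ v : V, α I' v = a • v := by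
                intro v
                obtain ⟨c, rfl⟩ := hgen v
                rw [map_smul, ← ha, smul_comm]
              have hBsc : ∀ v : V, α J' v = b • v := by
                intro v
                obtain ⟨c, rfl⟩ := hgen v
                rw [map_smul, ← hb, smul_comm]
              have hfac : ((1 + a) * (1 + b)) • u = 0 := by
                have h0 := hs1 u
                rw [hBsc u] at h0
                rw [hAsc u, hAsc (b • u)] at h0
                have h1 : ((1 + a) * (1 + b)) • u = (a • u + b • u + a • b • u) + u := by
                  module
                rw [h1, h0]
                abel
              have h0 : (1 + a) * (1 + b) = 0 :=
                (smul_eq_zero.mp hfac).resolve_right hu0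
              rcases mul_eq_zero.mp h0 with h' | h'
              · have ha1 : a = -1 := by linear_combination h'
                apply hv₂
                rw [hAsc v₂, ha1, neg_smul, one_smul]
              · have hb1 : b = -1 := by linear_combination h'
                -- show a = 1 then contradiction with hv₁
                have hBall : ∀ v : V, α J' v = -v := by
                  intro v
                  rw [hBsc v, hb1, neg_smul, one_smul]
                have h := rTJ u
                rw [hBall u, map_neg, hBall (α T' u), map_neg, hAsc (α T' u)] at h
                -- h : -(α T' u) = -(a • α T' u)
                have hu' : α T' u ≠ 0 := fun h' => hu0 (hCinj (by rw [h', map_zero]))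
                have hsum : (1 - a) • α T' u = 0 := by
                  rw [sub_smul, one_smul]
                  rw [neg_eq_iff_eq_neg] at h
                  nth_rewrite 1 [h]
                  abel
                have ha1 : a = 1 := by
                  have h5 := (smul_eq_zero.mp hsum).resolve_right hu'
                  linear_combination -h5
                apply hv₁
                rw [hAsc v₁, ha1, one_smul]
            have hdne2 : Module.finrank ℂ V ≠ 2 := by
              intro hd2
              have huniq : ∀ a b : ℂ, a • wp + b • wm = 0 → a = 0 ∧ b = 0 := by
                intro a b h
                have h2 := congrArg (α I') h
                rw [map_add, map_smul, map_smul, hAwp, hAwm, map_zero] at h2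
                have hsum : (2 * a) • wp = 0 := by
                  calc (2 * a) • wp = (a • wp + b • wm) + (a • wp + b • -wm) := by module
                  _ = 0 := by rw [h, h2, add_zero]
                have ha : a = 0 := by
                  have h3 := (smul_eq_zero.mp hsum).resolve_right hwp0
                  rcases mul_eq_zero.mp h3 with h' | h'
                  · norm_num at h'
                  · exact h'
                refine ⟨ha, ?_⟩
                rw [ha, zero_smul, zero_add] at h
                exact (smul_eq_zero.mp h).resolve_right hwm0
              have hli : LinearIndependent ℂ ![wp, wm] := by
                rw [linearIndependent_fin2]
                simp only [Matrix.cons_val_one, Matrix.head_cons, Matrix.cons_val_zero]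
                refine ⟨hwm0, fun a ha => ?_⟩
                have h0 : (1:ℂ) • wp + (-a) • wm = 0 := by
                  rw [one_smul, neg_smul, ← ha]
                  abel
                exact one_ne_zero (huniq 1 (-a) h0).1
              have hsp : Submodule.span ℂ (Set.range ![wp, wm]) = ⊤ := by
                apply hli.span_eq_top_of_card_eq_finrank
                simp [hd2]
              have hcoord : ∀ v : V, ∃ a b : ℂ, a • wp + b • wm = v := by
                intro v
                have hv : v ∈ Submodule.span ℂ ({wp, wm} : Set V) := by
                  rw [← BT.range_pair, hsp]
                  exact Submodule.mem_top
                exact Submodule.mem_span_pair.mp hv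
              -- B wp = -wp
              obtain ⟨x, y, hxy⟩ := hcoord (α J' wp)
              have hfix : α I' (α J' wp) = α J' wp := by rw [← pBA, hAwp]
              have hy0 : y = 0 := by
                have h2 := congrArg (α I') hxy
                rw [map_add, map_smul, map_smul, hAwp, hAwm, hfix] at h2
                have h3 : (2 * y) • wm = 0 := by
                  calc (2 * y) • wm = (x • wp + y • wm) - (x • wp + y • -wm) := by module
                  _ = 0 := by rw [hxy, h2, sub_self]
                have h4 := (smul_eq_zero.mp h3).resolve_right hwm0
                rcases mul_eq_zero.mp h4 with h' | h'
                · norm_num at h'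
                · exact h'
              have hBwp : α J' wp = x • wp := by
                rw [← hxy, hy0, zero_smul, add_zero]
              have hx : x = -1 := by
                have h := hs1 wp
                rw [hAwp, hBwp, map_smul, hAwp] at h
                have h2 : (2 * x + 2) • wp = 0 := by
                  calc (2 * x + 2) • wp = (wp + x • wp + x • wp) + wp := by module
                  _ = 0 := by rw [h]; abel
                have h3 := (smul_eq_zero.mp h2).resolve_right hwp0
                linear_combination h3 / 2
              -- B wm = q wm
              obtain ⟨p, q, hpq⟩ := hcoord (α J' wm)
              have hanti : α I' (α J' wm) = -(α J' wm) := by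
                rw [← pBA, hAwm, map_neg]
              have hp0 : p = 0 := by
                have h2 := congrArg (α I') hpq
                rw [map_add, map_smul, map_smul, hAwp, hAwm, hanti] at h2
                -- h2 : p•wp + q•(-wm) = -(α J' wm)
                have h3 : (2 * p) • wp = 0 := by
                  calc (2 * p) • wp = (p • wp + q • wm) + (p • wp + q • -wm) := by module
                  _ = α J' wm + -(α J' wm) := by rw [hpq, h2]
                  _ = 0 := by abel
                have h4 := (smul_eq_zero.mp h3).resolve_right hwp0
                rcases mul_eq_zero.mp h4 with h' | h'
                · norm_num at h'
                · exact h'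
              have hBwm : α J' wm = q • wm := by
                rw [← hpq, hp0, zero_smul, zero_add]
              -- C wp is B-fixed
              obtain ⟨r, s', hrs⟩ := hcoord (α T' wp)
              have hBC : α J' (α T' wp) = α T' wp := by
                have h := rTI wp
                rw [hAwp] at h
                exact h.symm
              have hr0q1 : r = 0 ∧ s' * (1 - q) = 0 := by
                have h2 := congrArg (α J') hrs
                rw [map_add, map_smul, map_smul, hBwp, hx, hBwm, hBC] at h2
                -- h2 : r • (-1 • wp) + s' • (q • wm) = α T' wp
                have h3 : (2 * r) • wp + (s' * (1 - q)) • wm = 0 := by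
                  calc (2 * r) • wp + (s' * (1 - q)) • wm
                      = (r • wp + s' • wm) - (r • ((-1 : ℂ) • wp) + s' • (q • wm)) := by module
                  _ = α T' wp - α T' wp := by rw [hrs, h2]
                  _ = 0 := sub_self _
                have h4 := huniq _ _ h3
                constructor
                · rcases mul_eq_zero.mp h4.1 with h' | h'
                  · norm_num at h'
                  · exact h'
                · exact h4.2
              have hs'ne : s' ≠ 0 := by
                intro h0
                have : α T' wp = 0 := by rw [← hrs, hr0q1.1, h0, zero_smul, zero_smul, add_zero]
                exact hwp0 (hCinj (by rw [this, map_zero]))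
              have hq1 : q = 1 := by
                have := hr0q1.2
                rcases mul_eq_zero.mp this with h' | h'
                · exact absurd h' hs'ne
                · linear_combination -h'
              -- final contradiction at wm
              obtain ⟨m, n, hmn⟩ := hcoord (α T' wm)
              have h := rTJ wm
              rw [hBwm, hq1, one_smul] at h
              -- h : α T' wm = α I' (α J' (α T' wm))
              have hJC : α J' (α T' wm) = -(m • wp) + n • wm := by
                rw [← hmn, map_add, map_smul, map_smul, hBwp, hx, hBwm, hq1]
                module
              have hIJC : α I' (α J' (α T' wm)) = -(m • wp) - n • wm := by
                rw [hJC, map_add, map_neg, map_smul, map_smul, hAwp, hAwm]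
                module
              rw [hIJC] at h
              have hmn0 : (2 * m) • wp + (2 * n) • wm = 0 := by
                calc (2 * m) • wp + (2 * n) • wm
                    = (m • wp + n • wm) - (-(m • wp) - n • wm) := by module
                _ = α T' wm - α T' wm := by rw [hmn, ← h]
                _ = 0 := sub_self _
              obtain ⟨hm0, hn0⟩ := huniq _ _ hmn0
              have hm0' : m = 0 := by
                rcases mul_eq_zero.mp hm0 with h' | h'
                · norm_num at h'
                · exact h'
              have hn0' : n = 0 := by
                rcases mul_eq_zero.mp hn0 with h' | h'
                · norm_num at h'
                · exact h'
              have : α T' wm = 0 := by rw [← hmn, hm0', hn0', zero_smul, zero_smul, add_zero]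
              exact hwm0 (hCinj (by rw [this, map_zero]))
            have hd : Module.finrank ℂ V = 3 := by
              have hpos : 0 < Module.finrank ℂ V := Module.finrank_pos
              omega
            exact Or.inr (Or.inr ⟨hd, by rw [hy1, hd]; norm_num⟩)
    · -- α ε = -1 : dimension is 2
      have pA2 : ∀ v : V, α I' (α I' v) = -v := fun v => by rw [rII, hPm]
      have pB2 : ∀ v : V, α J' (α J' v) = -v := fun v => by rw [rJJ, hPm]
      have pBA : ∀ v : V, α J' (α I' v) = -(α I' (α J' v)) := by
        intro v
        have h := rIJ v
        rw [hPm] at h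
        rw [h, neg_neg]
      set g₁ : Module.End ℂ V := (2⁻¹ : ℂ) • (1 + α I' + α J' + α I' * α J') with hg₁def
      set h₁ : Module.End ℂ V := (2⁻¹ : ℂ) • (1 - α I' - α J' - α I' * α J') with hh₁def
      set z : Module.End ℂ V := h₁ * α T' with hzdef
      have hg₁v : ∀ v : V, g₁ v = (2⁻¹:ℂ) • (v + α I' v + α J' v + α I' (α J' v)) := by
        intro v
        simp [hg₁def, LinearMap.smul_apply, LinearMap.add_apply, Module.End.mul_apply,
          Module.End.one_apply]
      have hh₁v : ∀ v : V, h₁ v = (2⁻¹:ℂ) • (v - α I' v - α J' v - α I' (α J' v)) := by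
        intro v
        simp [hh₁def, LinearMap.smul_apply, LinearMap.sub_apply, Module.End.mul_apply,
          Module.End.one_apply]
      have hzv : ∀ v : V, z v = h₁ (α T' v) := by
        intro v
        simp [hzdef, Module.End.mul_apply]
      have hhB : ∀ v : V, h₁ (α J' v) = α I' (h₁ v) := by
        intro v
        simp only [hh₁v, map_sub, map_smul, map_neg, pBA, pA2, pB2]
        module
      have hhAB : ∀ v : V, h₁ (α I' (α J' v)) = α J' (h₁ v) := by
        intro v
        simp only [hh₁v, map_sub, map_smul, map_neg, pBA, pA2, pB2]
        module
      have hzA : ∀ v : V, z (α I' v) = α I' (z v) := by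
        intro v
        rw [hzv, hzv, rTI]
        exact hhB (α T' v)
      have hzB : ∀ v : V, z (α J' v) = α J' (z v) := by
        intro v
        rw [hzv, hzv, rTJ]
        exact hhAB (α T' v)
      have hgh : ∀ v : V, g₁ (h₁ v) = v := by
        intro v
        simp only [hh₁v, hg₁v, map_sub, map_smul, map_add, map_neg, pBA, pA2, pB2]
        module
      have hzg : ∀ v : V, z (g₁ v) = g₁ (z v) := by
        intro v
        simp only [hg₁v, map_add, map_smul, hzA, hzB]
      have hCg : ∀ v : V, α T' v = g₁ (z v) := by
        intro v
        rw [hzv]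
        exact (hgh (α T' v)).symm
      obtain ⟨lam, hlam'⟩ := Module.End.exists_eigenvalue (z : Module.End ℂ V)
      obtain ⟨w', hw'⟩ := hlam'.exists_hasEigenvector
      have hzlam : ∀ v : V, z v = lam • v := by
        have hstabK : ∀ (γ : Γ), ∀ x ∈ Module.End.eigenspace z lam,
            α γ x ∈ Module.End.eigenspace z lam := by
          apply hstab
          · intro x hx
            rw [Module.End.mem_eigenspace_iff] at hx ⊢
            rw [hzA, hx, map_smul]
          · intro x hx
            rw [Module.End.mem_eigenspace_iff] at hx ⊢
            rw [hzB, hx, map_smul]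
          · intro x hx
            rw [Module.End.mem_eigenspace_iff] at hx ⊢
            rw [hCg x, hzg (z x), hx, map_smul, map_smul, hx, map_smul]
        rcases hirr _ hstabK with hbot | htop
        · exfalso
          have hmem : w' ∈ (⊥ : Submodule ℂ V) := hbot ▸ hw'.1
          exact hw'.2 ((Submodule.mem_bot ℂ).mp hmem)
        · intro v
          exact Module.End.mem_eigenspace_iff.mp (htop ▸ Submodule.mem_top)
      have hClam : ∀ v : V, α T' v = lam • g₁ v := by
        intro v
        rw [hCg, hzlam, map_smul]
      obtain ⟨ν, hν⟩ := Module.End.exists_eigenvalue (α I' : Module.End ℂ V)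
      obtain ⟨w0, hw0'⟩ := hν.exists_hasEigenvector
      have hAw0 : α I' w0 = ν • w0 := hw0'.apply_eq_smul
      have hw00 : w0 ≠ 0 := hw0'.2
      have hABw0 : α I' (α J' w0) = -(ν • α J' w0) := by
        have h := pBA w0
        rw [hAw0, map_smul] at h
        have h2 := congrArg Neg.neg h
        rw [neg_neg] at h2
        exact h2.symm
      have sm1 : w0 ∈ Submodule.span ℂ ({w0, α J' w0} : Set V) :=
        Submodule.subset_span (by simp)
      have sm2 : α J' w0 ∈ Submodule.span ℂ ({w0, α J' w0} : Set V) :=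
        Submodule.subset_span (by simp)
      have hstabW : ∀ (γ : Γ), ∀ u ∈ Submodule.span ℂ ({w0, α J' w0} : Set V),
          α γ u ∈ Submodule.span ℂ ({w0, α J' w0} : Set V) := by
        apply hstab
        · apply BT.span_stab
          intro x hx
          rcases hx with h | h
          · rw [h, hAw0]
            exact Submodule.smul_mem _ _ sm1
          · rw [h, hABw0]
            exact Submodule.neg_mem _ (Submodule.smul_mem _ _ sm2)
        · apply BT.span_stab
          intro x hx
          rcases hx with h | h
          · rw [h]; exact sm2
          · rw [h, pB2]
            exact Submodule.neg_mem _ sm1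
        · apply BT.span_stab
          intro x hx
          rcases hx with h | h
          · rw [h, hClam, hg₁v, hAw0, hABw0]
            refine Submodule.smul_mem _ _ (Submodule.smul_mem _ _ ?_)
            exact Submodule.add_mem _ (Submodule.add_mem _ (Submodule.add_mem _ sm1
              (Submodule.smul_mem _ _ sm1)) sm2) (Submodule.neg_mem _ (Submodule.smul_mem _ _ sm2))
          · rw [h, hClam, hg₁v, hABw0, pB2, map_neg, hAw0]
            refine Submodule.smul_mem _ _ (Submodule.smul_mem _ _ ?_)
            exact Submodule.add_mem _ (Submodule.add_mem _ (Submodule.add_mem _ sm2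
              (Submodule.neg_mem _ (Submodule.smul_mem _ _ sm2))) (Submodule.neg_mem _ sm1))
              (Submodule.neg_mem _ (Submodule.smul_mem _ _ sm1))
      rcases hirr _ hstabW with hbot | htop
      · exfalso
        have hmem : w0 ∈ (⊥ : Submodule ℂ V) := hbot ▸ sm1
        exact hw00 ((Submodule.mem_bot ℂ).mp hmem)
      · have hd2' : Module.finrank ℂ V ≤ 2 := BT.finrank_le_pair _ _ htop
        have hdne1 : Module.finrank ℂ V ≠ 1 := by
          intro hd1
          obtain ⟨u, hu0, hgen⟩ := finrank_eq_one_iff'.mp hd1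
          obtain ⟨a, ha⟩ := hgen (α I' u)
          obtain ⟨b, hb⟩ := hgen (α J' u)
          have hAsc : ∀ v : V, α I' v = a • v := by
            intro v
            obtain ⟨c, rfl⟩ := hgen v
            rw [map_smul, ← ha, smul_comm]
          have hBsc : ∀ v : V, α J' v = b • v := by
            intro v
            obtain ⟨c, rfl⟩ := hgen v
            rw [map_smul, ← hb, smul_comm]
          have ha2 : a * a = -1 := by
            have h := pA2 u
            rw [hAsc u, map_smul, hAsc u, smul_smul] at h
            have h2 : (a * a + 1) • u = 0 := by
              rw [add_smul, one_smul, h]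
              abel
            have h3 := (smul_eq_zero.mp h2).resolve_right hu0
            linear_combination h3
          have hb2 : b * b = -1 := by
            have h := pB2 u
            rw [hBsc u, map_smul, hBsc u, smul_smul] at h
            have h2 : (b * b + 1) • u = 0 := by
              rw [add_smul, one_smul, h]
              abel
            have h3 := (smul_eq_zero.mp h2).resolve_right hu0
            linear_combination h3
          have hab : a * b = 0 := by
            have h := pBA u
            rw [hAsc u, map_smul, hBsc u, map_smul, hAsc u, smul_smul, smul_smul] at h
            -- h : (a * b) • u = -((b * a) • u)
            have h2 : (a * b + b * a) • u = 0 := by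
              rw [add_smul, h]
              abel
            have h3 := (smul_eq_zero.mp h2).resolve_right hu0
            linear_combination h3 / 2
          rcases mul_eq_zero.mp hab with h' | h'
          · rw [h'] at ha2; norm_num at ha2
          · rw [h'] at hb2; norm_num at hb2
        have hd : Module.finrank ℂ V = 2 := by
          have hpos : 0 < Module.finrank ℂ V := Module.finrank_pos
          omega
        refine Or.inr (Or.inl ⟨hd, ?_⟩)
        have hid : α ε = -1 := by
          ext v
          simp [hPm v]
        show LinearMap.trace ℂ V (α ε) = -2
        rw [hid]
        have : LinearMap.trace ℂ V (-1) = -(LinearMap.trace ℂ V 1) := by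
          rw [map_neg]
        rw [this, LinearMap.trace_one, hd]
        norm_num
  rcases htri with ⟨hd, hy⟩ | ⟨hd, hy⟩ | ⟨hd, hy⟩ <;>
    obtain ⟨hL1, hL2⟩ := hmain _ _ hχ1 hy <;>
    rw [hd] at hL1 hL2 <;>
    constructor <;>
    simp only [hL1, hL2, hd] <;>
    norm_num [Complex.conj_ofNat]
end

section
/- Let Γ be any finite subgroup of SU(2) and α an N-dimensional representation of Γ, with c_Γ the exponent of Γ. Then the sums of the multiplicity polynomials satisfy Σ_{m=1}^{c_Γ} P_m^+(u) = Σ_{m=0}^{c_Γ−1} P_m^-(u) = (N c_Γ / #Γ)(u² − 1/4). -/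
open Finset

/-- Evaluation of a quadratic polynomial given by its coefficient triple
`(p₂, p₁, p₀) ↦ p₂ u² + p₁ u + p₀`. -/
def quadEval (p : ℂ × ℂ × ℂ) (u : ℂ) : ℂ := p.1 * u ^ 2 + p.2.1 * u + p.2.2

noncomputable def csq (t : ℂ) : ℕ → ℂ
  | 0 => 1
  | 1 => t
  | (k + 2) => t * csq t (k + 1) - csq t k

lemma csq_two : ∀ k, csq 2 k = (k : ℂ) + 1 := by
  intro k
  induction k using Nat.twoStepInduction with
  | zero => simp [csq]
  | one => simp [csq]; norm_num
  | more k ih1 ih2 => rw [csq, ih1, ih2]; push_cast; ring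

lemma csq_neg_two : ∀ k, csq (-2) k = (-1) ^ k * ((k : ℂ) + 1) := by
  intro k
  induction k using Nat.twoStepInduction with
  | zero => simp [csq]
  | one => simp [csq]; norm_num
  | more k ih1 ih2 => rw [csq, ih1, ih2]; push_cast; ring

lemma csq_periodic (t : ℂ) (c : ℕ) (h0 : csq t c = 1) (h1 : csq t (c + 1) = t) :
    ∀ k, csq t (k + c) = csq t k := by
  intro k
  induction k using Nat.twoStepInduction with
  | zero => simpa [csq] using h0
  | one => rw [Nat.add_comm]; simpa [csq] using h1
  | more k ih1 ih2 =>
      have e : k + 2 + c = (k + c) + 2 := by omega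
      have e1 : k + 1 + c = (k + c) + 1 := by omega
      rw [e, csq, ← e1, ih1, ih2, csq]

lemma chiESU_eq_csq (g : SL2C) :
    ∀ k, chiESU k g = csq (Matrix.trace ((g : SL2C) : Matrix (Fin 2) (Fin 2) ℂ)) k := by
  intro k
  induction k using Nat.twoStepInduction with
  | zero => rfl
  | one => rfl
  | more k ih1 ih2 => rw [chiESU, csq, ih1, ih2]

lemma sl2_sq (M : Matrix (Fin 2) (Fin 2) ℂ) (h : M.det = 1) :
    M * M = Matrix.trace M • M - 1 := by
  rw [Matrix.det_fin_two] at h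
  ext i j
  fin_cases i <;> fin_cases j
  · simp [Matrix.mul_apply, Fin.sum_univ_two, Matrix.trace_fin_two, Matrix.one_apply]
    linear_combination -h
  · simp [Matrix.mul_apply, Fin.sum_univ_two, Matrix.trace_fin_two, Matrix.one_apply]
    ring
  · simp [Matrix.mul_apply, Fin.sum_univ_two, Matrix.trace_fin_two, Matrix.one_apply]
    ring
  · simp [Matrix.mul_apply, Fin.sum_univ_two, Matrix.trace_fin_two, Matrix.one_apply]
    linear_combination -h

lemma sl2_pow (M : Matrix (Fin 2) (Fin 2) ℂ) (h : M.det = 1) :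
    ∀ k, M ^ (k + 2) = csq (Matrix.trace M) (k + 1) • M - csq (Matrix.trace M) k • 1 := by
  intro k
  induction k with
  | zero =>
      rw [pow_two, sl2_sq M h]
      simp [csq]
  | succ k ih =>
      rw [show k + 1 + 2 = k + 2 + 1 from rfl, pow_succ, ih, sub_mul, smul_mul_assoc, smul_mul_assoc, one_mul, sl2_sq M h,
        smul_sub, smul_smul]
      show _ = (Matrix.trace M * csq (Matrix.trace M) (k+1) - csq (Matrix.trace M) k) • M
        - csq (Matrix.trace M) (k+1) • 1
      module

lemma matrix_one_ne_neg_one : (1 : Matrix (Fin 2) (Fin 2) ℂ) ≠ -1 := by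
  intro h
  have h2 := congrFun (congrFun h 0) 0
  simp [Matrix.one_apply] at h2
  norm_num at h2

lemma sl2_trichotomy (M : Matrix (Fin 2) (Fin 2) ℂ) (hdet : M.det = 1) (c : ℕ) (hc : c ≠ 0)
    (hMc : M ^ c = 1) :
    M = 1 ∨ M = -1 ∨
      ((∀ k, csq (Matrix.trace M) (k + c) = csq (Matrix.trace M) k) ∧
        (∑ m ∈ range c, csq (Matrix.trace M) m = 0) ∧ M ≠ 1 ∧ M ≠ -1) := by
  set t := Matrix.trace M with ht
  match c, hc with
  | 1, _ => left; simpa using hMc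
  | (k + 2), _ =>
    have hpow := sl2_pow M hdet k
    rw [hMc] at hpow
    -- 1 = csq t (k+1) • M - csq t k • 1
    by_cases hz : csq t (k + 1) = 0
    · -- generic case
      have hk : csq t k = -1 := by
        have h1 := congrFun (congrFun hpow 0) 0
        rw [hz] at h1
        simp [Matrix.one_apply] at h1
        linear_combination h1
      have h0 : csq t (k + 2) = 1 := by rw [csq, hz, hk]; ring
      have h1 : csq t (k + 2 + 1) = t := by
        show csq t (k + 1 + 2) = t
        rw [csq, h0, hz]; ring
      have hper := csq_periodic t (k + 2) h0 h1
      have ht2 : t ≠ 2 := by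
        intro h2
        rw [h2, csq_two] at hz
        have h5 : ((k : ℂ) + 1) + 1 ≠ 0 := by
          intro hh
          have h6 : ((k + 2 : ℕ) : ℂ) = 0 := by push_cast; linear_combination hh
          exact absurd (by exact_mod_cast h6 : (k + 2 : ℕ) = 0) (by omega)
        push_cast at hz h5
        exact h5 (by linear_combination hz)
      have hne1 : M ≠ 1 := by
        intro h
        apply ht2
        rw [ht, h]
        simp [Matrix.trace_one]
      have hne2 : M ≠ -1 := by
        intro h
        rw [ht, h] at hz
        have htr : Matrix.trace (-1 : Matrix (Fin 2) (Fin 2) ℂ) = -2 := by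
          simp [Matrix.trace_one]
        rw [htr, csq_neg_two] at hz
        rcases mul_eq_zero.mp hz with h4 | h4
        · exact pow_ne_zero _ (by norm_num : (-1 : ℂ) ≠ 0) h4
        · have h6 : ((k + 2 : ℕ) : ℂ) = 0 := by push_cast at h4 ⊢; linear_combination h4
          exact absurd (by exact_mod_cast h6 : (k + 2 : ℕ) = 0) (by omega)
      -- sum is zero
      have hsum : ∑ m ∈ range (k + 2), csq t m = 0 := by
        set c' := k + 2 with hc'
        set S := ∑ m ∈ range c', csq t m with hS
        have e1 : ∑ m ∈ range c', csq t (m + 1) = S + csq t c' - csq t 0 := by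
          have := Finset.sum_range_succ' (fun m => csq t m) c'
          -- ∑_{range (c'+1)} = ∑_{range c'} (· + 1) + csq t 0
          have h2 : ∑ m ∈ range (c' + 1), csq t m = S + csq t c' := by
            rw [Finset.sum_range_succ]
          rw [h2] at this
          linear_combination -this
        have e2 : ∑ m ∈ range c', csq t (m + 2) = S + csq t c' + csq t (c' + 1) - csq t 0 - csq t 1 := by
          have := Finset.sum_range_succ' (fun m => csq t (m + 1)) c'
          have h2 : ∑ m ∈ range (c' + 1), csq t (m + 1) = (S + csq t c' - csq t 0) + csq t (c' + 1) := by
            rw [Finset.sum_range_succ, e1]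
          rw [h2] at this
          linear_combination -this
        have e3 : ∑ m ∈ range c', csq t (m + 2) = t * (∑ m ∈ range c', csq t (m + 1)) - S := by
          rw [hS, Finset.mul_sum, ← Finset.sum_sub_distrib]
          exact Finset.sum_congr rfl fun m _ => by rw [csq]
        rw [e1, e2, h0, h1] at e3
        have hcs0 : csq t 0 = 1 := rfl
        have hcs1 : csq t 1 = t := rfl
        rw [hcs0, hcs1] at e3
        -- S + 1 + t - 1 - t = t * (S + 1 - 1) - S
        have hfinal : (2 - t) * S = 0 := by linear_combination e3
        rcases mul_eq_zero.mp hfinal with h | h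
        · exact absurd (by linear_combination -h) ht2
        · exact h
      exact Or.inr (Or.inr ⟨hper, hsum, hne1, hne2⟩)
    · -- M is scalar
      have hsc : M = ((1 + csq t k) / csq t (k + 1)) • 1 := by
        have h1 : csq t (k + 1) • M = 1 + csq t k • 1 := by
          rw [← sub_eq_iff_eq_add]
          exact hpow.symm
        calc M = (csq t (k+1))⁻¹ • (csq t (k + 1) • M) := by
              rw [smul_smul, inv_mul_cancel₀ hz, one_smul]
          _ = (csq t (k+1))⁻¹ • ((1 + csq t k) • (1 : Matrix (Fin 2) (Fin 2) ℂ)) := by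
              rw [h1, add_smul, one_smul]
          _ = ((1 + csq t k) / csq t (k + 1)) • 1 := by
              rw [smul_smul, div_eq_inv_mul]
      set μ := (1 + csq t k) / csq t (k + 1) with hμ
      have hdet2 : μ ^ 2 = 1 := by
        have := hdet
        rw [hsc, Matrix.det_smul, Matrix.det_one] at this
        simpa using this
      have : μ = 1 ∨ μ = -1 := by
        have h2 : (μ - 1) * (μ + 1) = 0 := by linear_combination hdet2
        rcases mul_eq_zero.mp h2 with h | h
        · left; linear_combination h
        · right; linear_combination h
      rcases this with h | h
      · left; rw [hsc, h, one_smul]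
      · right; rw [hsc, h]; simp

lemma alt_sum_one (j : ℕ) : ∑ m ∈ range (2 * j), (-1 : ℂ) ^ m = 0 := by
  induction j with
  | zero => simp
  | succ j ih =>
      have e : 2 * (j + 1) = (2 * j) + 1 + 1 := by omega
      rw [e, Finset.sum_range_succ, Finset.sum_range_succ, ih]
      have h1 : ((-1 : ℂ)) ^ (2 * j) = 1 := by rw [pow_mul]; norm_num
      have h2 : ((-1 : ℂ)) ^ (2 * j + 1) = -1 := by rw [pow_succ, h1]; ring
      rw [h1, h2]; ring

lemma alt_sum_id (j : ℕ) : ∑ m ∈ range (2 * j), (-1 : ℂ) ^ m * m = -(j : ℂ) := by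
  induction j with
  | zero => simp
  | succ j ih =>
      have e : 2 * (j + 1) = (2 * j) + 1 + 1 := by omega
      rw [e, Finset.sum_range_succ, Finset.sum_range_succ, ih]
      have h1 : ((-1 : ℂ)) ^ (2 * j) = 1 := by rw [pow_mul]; norm_num
      have h2 : ((-1 : ℂ)) ^ (2 * j + 1) = -1 := by rw [pow_succ, h1]; ring
      rw [h1, h2]; push_cast; ring

lemma gauss_sum_complex (c : ℕ) : ∑ m ∈ range c, (m : ℂ) = (c : ℂ) * ((c : ℂ) - 1) / 2 := by
  induction c with
  | zero => simp
  | succ c ih =>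
      rw [Finset.sum_range_succ, ih]
      push_cast
      ring

/-- Let `Γ ⊂ SU(2)` be any finite subgroup, `α` an `N`-dimensional
representation of `Γ`, and `c_Γ = Monoid.exponent Γ` the exponent of `Γ`.  Let `P_m^+`
(for `1 ≤ m ≤ c_Γ`) and `P_m^-` (for `0 ≤ m ≤ c_Γ − 1`) be the quadratic multiplicity
polynomials of the twisted Dirac operator `D_α^Γ` on `S³/Γ`:  by the Cisneros-Molina
theorem, `P_m^+(−1/2 + (k+1)) = ⟨χ_{E_{k−1}}, χ_α⟩_Γ (k+1)` for `k ≥ 1`, `k ≡ m (mod c_Γ)`,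
and `P_m^-(−1/2 − (k+1)) = ⟨χ_{E_{k+1}}, χ_α⟩_Γ (k+1)` for `k ≥ 0`, `k ≡ m (mod c_Γ)`.
Then `Σ_{m=1}^{c_Γ} P_m^+(u) = Σ_{m=0}^{c_Γ−1} P_m^-(u) = (N c_Γ/#Γ)(u² − 1/4)`. -/
theorem sum_multiplicity_polynomials_general
    (Γ : Subgroup SL2C) [Fintype Γ] (hsu : IsSU2Subgroup Γ)
    {V : Type*} [AddCommGroup V] [Module ℂ V] [FiniteDimensional ℂ V]
    (α : Representation ℂ Γ V) (N : ℕ) (hN : Module.finrank ℂ V = N)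
    (Pp Pm : ℕ → ℂ × ℂ × ℂ)
    (hplus : ∀ m ∈ Finset.Icc 1 (Monoid.exponent Γ), ∀ k : ℕ, 1 ≤ k →
      k % Monoid.exponent Γ = m % Monoid.exponent Γ →
      quadEval (Pp m) (-(1 / 2) + ((k : ℂ) + 1))
        = pairSU Γ (fun g => chiESU (k - 1) g) (chiRepSU α) * ((k : ℂ) + 1))
    (hminus : ∀ m ∈ Finset.range (Monoid.exponent Γ), ∀ k : ℕ,
      k % Monoid.exponent Γ = m % Monoid.exponent Γ →
      quadEval (Pm m) (-(1 / 2) - ((k : ℂ) + 1))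
        = pairSU Γ (fun g => chiESU (k + 1) g) (chiRepSU α) * ((k : ℂ) + 1))
    (u : ℂ) :
    ∑ m ∈ Finset.Icc 1 (Monoid.exponent Γ), quadEval (Pp m) u
      = (N : ℂ) * (Monoid.exponent Γ : ℂ) / (Fintype.card Γ : ℂ) * (u ^ 2 - 1 / 4)
    ∧ ∑ m ∈ Finset.range (Monoid.exponent Γ), quadEval (Pm m) u
      = (N : ℂ) * (Monoid.exponent Γ : ℂ) / (Fintype.card Γ : ℂ) * (u ^ 2 - 1 / 4) := by
  classical
  set c := Monoid.exponent Γ with hc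
  -- set already abstracted c everywhere
  have hc0 : c ≠ 0 := Monoid.exponent_ne_zero_of_finite
  have hcC : (c : ℂ) ≠ 0 := Nat.cast_ne_zero.mpr hc0
  have hGC : (Fintype.card Γ : ℂ) ≠ 0 := Nat.cast_ne_zero.mpr Fintype.card_ne_zero
  -- basic matrix facts about elements of Γ
  have hdet : ∀ g : Γ, (((g : SL2C) : Matrix (Fin 2) (Fin 2) ℂ)).det = 1 :=
    fun g => (g : SL2C).2
  have hpowc : ∀ g : Γ, ((g : SL2C) : Matrix (Fin 2) (Fin 2) ℂ) ^ c = 1 := by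
    intro g
    have h1 : g ^ c = 1 := Monoid.pow_exponent_eq_one g
    have h2 : ((g : SL2C)) ^ c = 1 := by
      have := congrArg (fun x : Γ => (x : SL2C)) h1
      simpa using this
    have h3 := congrArg (fun x : SL2C => (x : Matrix (Fin 2) (Fin 2) ℂ)) h2
    simpa using h3
  have tri : ∀ g : Γ, ((g : SL2C) : Matrix (Fin 2) (Fin 2) ℂ) = 1 ∨
      ((g : SL2C) : Matrix (Fin 2) (Fin 2) ℂ) = -1 ∨
      ((∀ k, csq (Matrix.trace ((g : SL2C) : Matrix (Fin 2) (Fin 2) ℂ)) (k + c)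
          = csq (Matrix.trace ((g : SL2C) : Matrix (Fin 2) (Fin 2) ℂ)) k) ∧
        (∑ m ∈ range c, csq (Matrix.trace ((g : SL2C) : Matrix (Fin 2) (Fin 2) ℂ)) m = 0) ∧
        ((g : SL2C) : Matrix (Fin 2) (Fin 2) ℂ) ≠ 1 ∧
        ((g : SL2C) : Matrix (Fin 2) (Fin 2) ℂ) ≠ -1) :=
    fun g => sl2_trichotomy _ (hdet g) c hc0 (hpowc g)
  have hinj : ∀ a b : Γ, ((a : SL2C) : Matrix (Fin 2) (Fin 2) ℂ)
      = ((b : SL2C) : Matrix (Fin 2) (Fin 2) ℂ) → a = b := by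
    intro a b hab
    exact Subtype.ext (Subtype.ext hab)
  have heven : ∀ g : Γ, ((g : SL2C) : Matrix (Fin 2) (Fin 2) ℂ) = -1 → Even c := by
    intro g hg
    have hg1 : g ≠ 1 := by
      intro h
      rw [h] at hg
      apply matrix_one_ne_neg_one
      simpa using hg
    have hg2 : g ^ 2 = 1 := by
      apply hinj
      have h1 : (((g ^ 2 : Γ) : SL2C) : Matrix (Fin 2) (Fin 2) ℂ)
          = (((g : SL2C) : Matrix (Fin 2) (Fin 2) ℂ)) ^ 2 := by
        simp
      rw [h1, hg]
      simpa using (neg_one_sq : (-1 : Matrix (Fin 2) (Fin 2) ℂ) ^ 2 = 1)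
    have ho : orderOf g = 2 := orderOf_eq_prime hg2 hg1
    have hdvd : 2 ∣ c := ho ▸ Monoid.order_dvd_exponent g
    obtain ⟨d, hd⟩ := hdvd
    exact ⟨d, by omega⟩
  -- indicator functions
  set ei : Γ → ℂ := fun g => if ((g : SL2C) : Matrix (Fin 2) (Fin 2) ℂ) = 1 then 1 else 0
    with hei
  set fi : Γ → ℂ := fun g => if ((g : SL2C) : Matrix (Fin 2) (Fin 2) ℂ) = -1 then 1 else 0
    with hfi
  set E := ∑ g : Γ, ei g * (starRingEnd ℂ) (chiRepSU α g) with hEdef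
  set F := ∑ g : Γ, fi g * (starRingEnd ℂ) (chiRepSU α g) with hFdef
  set D : ℕ → ℂ := fun k => pairSU Γ (fun g => chiESU k (g : SL2C)) (chiRepSU α) with hD
  have hei1 : ∀ g : Γ, ((g : SL2C) : Matrix (Fin 2) (Fin 2) ℂ) = 1 →
      ei g = 1 ∧ fi g = 0 := by
    intro g h
    constructor
    · simp only [hei]; rw [if_pos h]
    · simp only [hfi]; rw [if_neg (by rw [h]; exact matrix_one_ne_neg_one)]
  have hei2 : ∀ g : Γ, ((g : SL2C) : Matrix (Fin 2) (Fin 2) ℂ) = -1 →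
      ei g = 0 ∧ fi g = 1 := by
    intro g h
    constructor
    · simp only [hei]; rw [if_neg (by rw [h]; exact fun hh => matrix_one_ne_neg_one hh.symm)]
    · simp only [hfi]; rw [if_pos h]
  have hei3 : ∀ g : Γ, ((g : SL2C) : Matrix (Fin 2) (Fin 2) ℂ) ≠ 1 →
      ((g : SL2C) : Matrix (Fin 2) (Fin 2) ℂ) ≠ -1 → ei g = 0 ∧ fi g = 0 := by
    intro g h1 h2
    constructor
    · simp only [hei]; rw [if_neg h1]
    · simp only [hfi]; rw [if_neg h2]
  have htr1 : ∀ g : Γ, ((g : SL2C) : Matrix (Fin 2) (Fin 2) ℂ) = 1 →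
      Matrix.trace ((g : SL2C) : Matrix (Fin 2) (Fin 2) ℂ) = 2 := by
    intro g h; rw [h]; simp [Matrix.trace_one]
  have htr2 : ∀ g : Γ, ((g : SL2C) : Matrix (Fin 2) (Fin 2) ℂ) = -1 →
      Matrix.trace ((g : SL2C) : Matrix (Fin 2) (Fin 2) ℂ) = -2 := by
    intro g h; rw [h]; simp [Matrix.trace_one]
  -- pointwise difference formula
  have hdiff : ∀ (k : ℕ) (g : Γ), chiESU (k + 2 * c) (g : SL2C) - chiESU k (g : SL2C)
      = 2 * (c : ℂ) * ei g + (-1) ^ k * (2 * (c : ℂ)) * fi g := by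
    intro k g
    rw [chiESU_eq_csq, chiESU_eq_csq]
    rcases tri g with h1 | h1 | ⟨hper, hsum0, hne1, hne2⟩
    · obtain ⟨he, hf⟩ := hei1 g h1
      rw [htr1 g h1, csq_two, csq_two, he, hf]
      push_cast; ring
    · obtain ⟨he, hf⟩ := hei2 g h1
      rw [htr2 g h1, csq_neg_two, csq_neg_two, he, hf]
      have hs : ((-1 : ℂ)) ^ (k + 2 * c) = (-1) ^ k := by
        rw [pow_add, pow_mul]; norm_num
      rw [hs]; push_cast; ring
    · obtain ⟨he, hf⟩ := hei3 g hne1 hne2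
      have h2 : k + 2 * c = (k + c) + c := by omega
      rw [he, hf, h2, hper, hper]; ring
  -- pointwise sums
  have hEsum1 : ∀ g : Γ, ∑ m ∈ range c, chiESU m (g : SL2C)
      = ((c : ℂ) * ((c : ℂ) + 1) / 2) * ei g - ((c : ℂ) / 2) * fi g := by
    intro g
    rw [Finset.sum_congr rfl (fun m _ => chiESU_eq_csq (g : SL2C) m)]
    rcases tri g with h1 | h1 | ⟨hper, hsum0, hne1, hne2⟩
    · obtain ⟨he, hf⟩ := hei1 g h1
      have hterm : ∀ m ∈ range c,
          csq (Matrix.trace ((g : SL2C) : Matrix (Fin 2) (Fin 2) ℂ)) m = (m : ℂ) + 1 :=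
        fun m _ => by rw [htr1 g h1, csq_two]
      rw [Finset.sum_congr rfl hterm, Finset.sum_add_distrib, gauss_sum_complex,
        Finset.sum_const, Finset.card_range, nsmul_eq_mul, he, hf]
      ring
    · obtain ⟨he, hf⟩ := hei2 g h1
      obtain ⟨j, hj⟩ := heven g h1
      have hj' : c = 2 * j := by omega
      have hterm : ∀ m ∈ range c,
          csq (Matrix.trace ((g : SL2C) : Matrix (Fin 2) (Fin 2) ℂ)) m
            = (-1 : ℂ) ^ m * (m : ℂ) + (-1 : ℂ) ^ m :=
        fun m _ => by rw [htr2 g h1, csq_neg_two]; ring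
      rw [Finset.sum_congr rfl hterm, Finset.sum_add_distrib, hj', alt_sum_id, alt_sum_one,
        he, hf]
      push_cast; ring
    · obtain ⟨he, hf⟩ := hei3 g hne1 hne2
      rw [hsum0, he, hf]; ring
  have hEsum2 : ∀ g : Γ, ∑ m ∈ range c, chiESU (m + 1) (g : SL2C)
      = ((c : ℂ) * ((c : ℂ) + 3) / 2) * ei g + ((c : ℂ) / 2) * fi g := by
    intro g
    rw [Finset.sum_congr rfl (fun m _ => chiESU_eq_csq (g : SL2C) (m + 1))]
    rcases tri g with h1 | h1 | ⟨hper, hsum0, hne1, hne2⟩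
    · obtain ⟨he, hf⟩ := hei1 g h1
      have hterm : ∀ m ∈ range c,
          csq (Matrix.trace ((g : SL2C) : Matrix (Fin 2) (Fin 2) ℂ)) (m + 1) = (m : ℂ) + 2 :=
        fun m _ => by rw [htr1 g h1, csq_two]; push_cast; ring
      rw [Finset.sum_congr rfl hterm, Finset.sum_add_distrib, gauss_sum_complex,
        Finset.sum_const, Finset.card_range, nsmul_eq_mul, he, hf]
      ring
    · obtain ⟨he, hf⟩ := hei2 g h1
      obtain ⟨j, hj⟩ := heven g h1
      have hj' : c = 2 * j := by omega
      have hterm : ∀ m ∈ range c,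
          csq (Matrix.trace ((g : SL2C) : Matrix (Fin 2) (Fin 2) ℂ)) (m + 1)
            = -((-1 : ℂ) ^ m * (m : ℂ)) + (-2) * ((-1 : ℂ) ^ m) :=
        fun m _ => by rw [htr2 g h1, csq_neg_two]; push_cast; ring
      rw [Finset.sum_congr rfl hterm, Finset.sum_add_distrib, Finset.sum_neg_distrib,
        ← Finset.mul_sum, hj', alt_sum_id, alt_sum_one, he, hf]
      push_cast; ring
    · obtain ⟨he, hf⟩ := hei3 g hne1 hne2
      have h4 : csq (Matrix.trace ((g : SL2C) : Matrix (Fin 2) (Fin 2) ℂ)) c = 1 := by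
        have h5 := hper 0
        rw [zero_add] at h5
        rw [h5]; rfl
      have h5 := Finset.sum_range_succ'
        (fun m => csq (Matrix.trace ((g : SL2C) : Matrix (Fin 2) (Fin 2) ℂ)) m) c
      have h6 := Finset.sum_range_succ
        (fun m => csq (Matrix.trace ((g : SL2C) : Matrix (Fin 2) (Fin 2) ℂ)) m) c
      have h7 : ∑ m ∈ range c,
          csq (Matrix.trace ((g : SL2C) : Matrix (Fin 2) (Fin 2) ℂ)) (m + 1)
          = ∑ m ∈ range c, csq (Matrix.trace ((g : SL2C) : Matrix (Fin 2) (Fin 2) ℂ)) m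
            + csq (Matrix.trace ((g : SL2C) : Matrix (Fin 2) (Fin 2) ℂ)) c
            - csq (Matrix.trace ((g : SL2C) : Matrix (Fin 2) (Fin 2) ℂ)) 0 := by
        linear_combination h6 - h5
      have h8 : csq (Matrix.trace ((g : SL2C) : Matrix (Fin 2) (Fin 2) ℂ)) 0 = 1 := rfl
      rw [h7, hsum0, h4, h8, he, hf]; ring
  -- E = N
  have hchi1 : (starRingEnd ℂ) (chiRepSU α 1) = (N : ℂ) := by
    have h2 : chiRepSU α 1 = (N : ℂ) := by
      show LinearMap.trace ℂ V (α 1) = (N : ℂ)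
      rw [map_one, LinearMap.trace_one, hN]
    rw [h2, map_natCast]
  have hE : E = (N : ℂ) := by
    rw [hEdef]
    have h1 : ∀ g : Γ, ei g * (starRingEnd ℂ) (chiRepSU α g)
        = if g = (1 : Γ) then (starRingEnd ℂ) (chiRepSU α g) else 0 := by
      intro g
      by_cases h : g = 1
      · rw [if_pos h]
        have hm : ((g : SL2C) : Matrix (Fin 2) (Fin 2) ℂ) = 1 := by rw [h]; simp
        rw [(hei1 g hm).1, one_mul]
      · rw [if_neg h]
        have hm : ((g : SL2C) : Matrix (Fin 2) (Fin 2) ℂ) ≠ 1 := by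
          intro hm
          exact h (hinj g 1 (by simpa using hm))
        have he0 : ei g = 0 := by simp only [hei]; rw [if_neg hm]
        rw [he0, zero_mul]
    rw [Finset.sum_congr rfl (fun g _ => h1 g), Finset.sum_ite_eq' Finset.univ (1 : Γ)]
    rw [if_pos (Finset.mem_univ _), hchi1]
  -- F vanishes or c is even
  have hF0 : F = 0 ∨ Even c := by
    by_cases h : ∃ g : Γ, ((g : SL2C) : Matrix (Fin 2) (Fin 2) ℂ) = -1
    · exact Or.inr (heven h.choose h.choose_spec)
    · left
      rw [hFdef]
      apply Finset.sum_eq_zero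
      intro g _
      have hf0 : fi g = 0 := by
        simp only [hfi]; rw [if_neg (fun hm => h ⟨g, hm⟩)]
      rw [hf0, zero_mul]
  -- the pairing sequence D
  have hDstep : ∀ k : ℕ, D (k + 2 * c)
      = D k + 2 * (c : ℂ) * ((Fintype.card Γ : ℂ)⁻¹ * (E + (-1) ^ k * F)) := by
    intro k
    have h1 : D (k + 2 * c) - D k = (Fintype.card Γ : ℂ)⁻¹ *
        ∑ g : Γ, ((chiESU (k + 2 * c) (g : SL2C) - chiESU k (g : SL2C))
          * (starRingEnd ℂ) (chiRepSU α g)) := by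
      simp only [hD, pairSU]
      rw [← mul_sub, ← Finset.sum_sub_distrib]
      congr 1
      exact Finset.sum_congr rfl fun g _ => by ring
    have h2 : ∑ g : Γ, ((chiESU (k + 2 * c) (g : SL2C) - chiESU k (g : SL2C))
          * (starRingEnd ℂ) (chiRepSU α g))
        = 2 * (c : ℂ) * E + (-1) ^ k * (2 * (c : ℂ)) * F := by
      rw [hEdef, hFdef, Finset.mul_sum, Finset.mul_sum, ← Finset.sum_add_distrib]
      exact Finset.sum_congr rfl fun g _ => by rw [hdiff k g]; ring
    rw [h2] at h1
    linear_combination h1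
  have hDsum1 : ∑ m ∈ range c, D m = (Fintype.card Γ : ℂ)⁻¹ *
      (((c : ℂ) * ((c : ℂ) + 1) / 2) * E - ((c : ℂ) / 2) * F) := by
    simp only [hD, pairSU]
    rw [← Finset.mul_sum]
    congr 1
    rw [Finset.sum_comm]
    have h1 : ∀ g ∈ (Finset.univ : Finset Γ),
        ∑ m ∈ range c, chiESU m (g : SL2C) * (starRingEnd ℂ) (chiRepSU α g)
          = (((c : ℂ) * ((c : ℂ) + 1) / 2) * ei g - ((c : ℂ) / 2) * fi g)
            * (starRingEnd ℂ) (chiRepSU α g) := by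
      intro g _
      rw [← Finset.sum_mul, hEsum1 g]
    rw [Finset.sum_congr rfl h1, hEdef, hFdef, Finset.mul_sum, Finset.mul_sum,
      ← Finset.sum_sub_distrib]
    exact Finset.sum_congr rfl fun g _ => by ring
  have hDsum2 : ∑ m ∈ range c, D (m + 1) = (Fintype.card Γ : ℂ)⁻¹ *
      (((c : ℂ) * ((c : ℂ) + 3) / 2) * E + ((c : ℂ) / 2) * F) := by
    simp only [hD, pairSU]
    rw [← Finset.mul_sum]
    congr 1
    rw [Finset.sum_comm]
    have h1 : ∀ g ∈ (Finset.univ : Finset Γ),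
        ∑ m ∈ range c, chiESU (m + 1) (g : SL2C) * (starRingEnd ℂ) (chiRepSU α g)
          = (((c : ℂ) * ((c : ℂ) + 3) / 2) * ei g + ((c : ℂ) / 2) * fi g)
            * (starRingEnd ℂ) (chiRepSU α g) := by
      intro g _
      rw [← Finset.sum_mul, hEsum2 g]
    rw [Finset.sum_congr rfl h1, hEdef, hFdef, Finset.mul_sum, Finset.mul_sum,
      ← Finset.sum_add_distrib]
    exact Finset.sum_congr rfl fun g _ => by ring
  -- generic linear/alternating sum evaluation
  have sum_linpoly : ∀ (A B C D4 : ℂ),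
      ∑ i ∈ range c, (A + B * (i : ℂ) + C * (-1 : ℂ) ^ i + D4 * ((-1 : ℂ) ^ i * (i : ℂ)))
        = (c : ℂ) * A + B * ((c : ℂ) * ((c : ℂ) - 1) / 2)
          + C * (∑ i ∈ range c, (-1 : ℂ) ^ i)
          + D4 * (∑ i ∈ range c, (-1 : ℂ) ^ i * (i : ℂ)) := by
    intro A B C D4
    rw [Finset.sum_add_distrib, Finset.sum_add_distrib, Finset.sum_add_distrib,
      Finset.sum_const, Finset.card_range, nsmul_eq_mul, ← Finset.mul_sum, ← Finset.mul_sum,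
      ← Finset.mul_sum, gauss_sum_complex]
  have hFT2 : F * (∑ i ∈ range c, (-1 : ℂ) ^ i) = 0 := by
    rcases hF0 with h | h
    · rw [h, zero_mul]
    · obtain ⟨j, hj⟩ := h
      have hj' : c = 2 * j := by omega
      rw [hj', alt_sum_one, mul_zero]
  have hFT3 : F * (∑ i ∈ range c, (-1 : ℂ) ^ i * (i : ℂ)) + F * ((c : ℂ) / 2) = 0 := by
    rcases hF0 with h | h
    · rw [h, zero_mul, zero_mul, add_zero]
    · obtain ⟨j, hj⟩ := h
      have hj' : c = 2 * j := by omega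
      rw [hj', alt_sum_id]
      push_cast; ring
  have hfold : ∀ k : ℕ, pairSU Γ (fun g => chiESU k (g : SL2C)) (chiRepSU α) = D k :=
    fun k => rfl
  have h8 : (8 : ℂ) * (c : ℂ) ^ 2 ≠ 0 := mul_ne_zero (by norm_num) (pow_ne_zero _ hcC)
  -- interpolation: the plus-side polynomials
  have hkey_plus : ∀ i ∈ range c, quadEval (Pp (1 + i)) u
      = D i * (u + 1 / 2) + (Fintype.card Γ : ℂ)⁻¹ * (E + (-1) ^ i * F)
          * ((u - (i : ℂ) - 3 / 2) * (u + 1 / 2)) := by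
    intro i hi
    have hic : i < c := Finset.mem_range.mp hi
    have hmem : 1 + i ∈ Icc 1 c := Finset.mem_Icc.mpr ⟨by omega, by omega⟩
    have hd0 := hplus (1 + i) hmem (1 + i) (by omega) rfl
    have hd1 := hplus (1 + i) hmem (1 + i + 2 * c) (by omega)
      (Nat.add_mul_mod_self_right (1 + i) 2 c)
    have hd2 := hplus (1 + i) hmem (1 + i + 4 * c) (by omega)
      (Nat.add_mul_mod_self_right (1 + i) 4 c)
    rw [show 1 + i - 1 = i from by omega] at hd0
    rw [show 1 + i + 2 * c - 1 = i + 2 * c from by omega] at hd1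
    rw [show 1 + i + 4 * c - 1 = (i + 2 * c) + 2 * c from by omega] at hd2
    rw [hfold] at hd0 hd1 hd2
    rw [hDstep i] at hd1
    rw [hDstep (i + 2 * c), hDstep i] at hd2
    have hsgn : ((-1 : ℂ)) ^ (i + 2 * c) = (-1) ^ i := by rw [pow_add, pow_mul]; norm_num
    rw [hsgn] at hd2
    apply mul_left_cancel₀ h8
    simp only [quadEval] at hd0 hd1 hd2 ⊢
    push_cast at hd0 hd1 hd2 ⊢
    linear_combination
      ((u - ((i : ℂ) + 3/2 + 2 * (c : ℂ))) * (u - ((i : ℂ) + 3/2 + 4 * (c : ℂ)))) * hd0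
      - 2 * ((u - ((i : ℂ) + 3/2)) * (u - ((i : ℂ) + 3/2 + 4 * (c : ℂ)))) * hd1
      + ((u - ((i : ℂ) + 3/2)) * (u - ((i : ℂ) + 3/2 + 2 * (c : ℂ)))) * hd2
  -- interpolation: the minus-side polynomials
  have hkey_minus : ∀ i ∈ range c, quadEval (Pm i) u
      = -(D (i + 1) * (u + 1 / 2)) + (Fintype.card Γ : ℂ)⁻¹ * (E + (-1) ^ (i + 1) * F)
          * ((u + (i : ℂ) + 3 / 2) * (u + 1 / 2)) := by
    intro i hi
    have hd0 := hminus i hi i rfl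
    have hd1 := hminus i hi (i + 2 * c) (Nat.add_mul_mod_self_right i 2 c)
    have hd2 := hminus i hi (i + 4 * c) (Nat.add_mul_mod_self_right i 4 c)
    rw [show i + 2 * c + 1 = (i + 1) + 2 * c from by omega] at hd1
    rw [show i + 4 * c + 1 = ((i + 1) + 2 * c) + 2 * c from by omega] at hd2
    rw [hfold] at hd0 hd1 hd2
    rw [hDstep (i + 1)] at hd1
    rw [hDstep ((i + 1) + 2 * c), hDstep (i + 1)] at hd2
    have hsgn : ((-1 : ℂ)) ^ (i + 1 + 2 * c) = (-1) ^ (i + 1) := by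
      rw [pow_add, pow_mul]; norm_num
    rw [hsgn] at hd2
    apply mul_left_cancel₀ h8
    simp only [quadEval] at hd0 hd1 hd2 ⊢
    push_cast at hd0 hd1 hd2 ⊢
    linear_combination
      ((u - (-(i : ℂ) - 3/2 - 2 * (c : ℂ))) * (u - (-(i : ℂ) - 3/2 - 4 * (c : ℂ)))) * hd0
      - 2 * ((u - (-(i : ℂ) - 3/2)) * (u - (-(i : ℂ) - 3/2 - 4 * (c : ℂ)))) * hd1
      + ((u - (-(i : ℂ) - 3/2)) * (u - (-(i : ℂ) - 3/2 - 2 * (c : ℂ)))) * hd2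
  constructor
  · -- plus side
    have h0 : ∑ m ∈ Icc 1 c, quadEval (Pp m) u
        = ∑ i ∈ range c, quadEval (Pp (1 + i)) u := by
      rw [← Finset.Ico_add_one_right_eq_Icc, Finset.sum_Ico_eq_sum_range]
      norm_num
    rw [h0, Finset.sum_congr rfl hkey_plus, Finset.sum_add_distrib, ← Finset.sum_mul,
      hDsum1]
    have hsplit : ∀ i ∈ range c,
        (Fintype.card Γ : ℂ)⁻¹ * (E + (-1) ^ i * F) * ((u - (i : ℂ) - 3 / 2) * (u + 1 / 2))
          = ((Fintype.card Γ : ℂ)⁻¹ * E * ((u - 3/2) * (u + 1/2)))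
            + (-((Fintype.card Γ : ℂ)⁻¹ * E * (u + 1/2))) * (i : ℂ)
            + ((Fintype.card Γ : ℂ)⁻¹ * F * ((u - 3/2) * (u + 1/2))) * (-1 : ℂ) ^ i
            + (-((Fintype.card Γ : ℂ)⁻¹ * F * (u + 1/2))) * ((-1 : ℂ) ^ i * (i : ℂ)) :=
      fun i _ => by ring
    rw [Finset.sum_congr rfl hsplit, sum_linpoly, hE]
    linear_combination ((Fintype.card Γ : ℂ)⁻¹ * (u + 1/2) * (u - 3/2)) * hFT2
      - ((Fintype.card Γ : ℂ)⁻¹ * (u + 1/2)) * hFT3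
  · -- minus side
    rw [Finset.sum_congr rfl hkey_minus, Finset.sum_add_distrib, Finset.sum_neg_distrib,
      ← Finset.sum_mul, hDsum2]
    have hsplit : ∀ i ∈ range c,
        (Fintype.card Γ : ℂ)⁻¹ * (E + (-1) ^ (i + 1) * F) * ((u + (i : ℂ) + 3 / 2) * (u + 1 / 2))
          = ((Fintype.card Γ : ℂ)⁻¹ * E * ((u + 3/2) * (u + 1/2)))
            + ((Fintype.card Γ : ℂ)⁻¹ * E * (u + 1/2)) * (i : ℂ)
            + (-((Fintype.card Γ : ℂ)⁻¹ * F * ((u + 3/2) * (u + 1/2)))) * (-1 : ℂ) ^ i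
            + (-((Fintype.card Γ : ℂ)⁻¹ * F * (u + 1/2))) * ((-1 : ℂ) ^ i * (i : ℂ)) :=
      fun i _ => by rw [pow_succ]; ring
    rw [Finset.sum_congr rfl hsplit, sum_linpoly, hE]
    linear_combination (-((Fintype.card Γ : ℂ)⁻¹ * (u + 1/2) * (u + 3/2))) * hFT2
      - ((Fintype.card Γ : ℂ)⁻¹ * (u + 1/2)) * hFT3
end

section
/- Suppose for t > 0 the heat trace of an operator H decomposes as Tr(e^{-tH}) = (1/#Γ) Tr(e^{-tH̃}) + R(t), where for every n ∈ ℕ there is C_n > 0 with |R(t)| ≤ C_n t^n for all t > 0. If φ ∈ S(0,∞) and f(x) = L[φ](x²), then Tr f(√H/Λ) − (1/#Γ) Tr f(√H̃/Λ) = ∫_0^∞ R(s/Λ²) φ(s) ds = O(Λ^{-∞}) as Λ → +∞. -/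
open MeasureTheory

/-- Suppose that for `t > 0` the heat trace of an operator `H`
decomposes as `Tr(e^{-tH}) = (1/#Γ) Tr(e^{-tH̃}) + R(t)`, where for every `n` there is
`C_n > 0` with `|R(t)| ≤ C_n t^n` for all `t > 0`.  If `φ ∈ S(0,∞)` and
`f(x) = L[φ](x²)`, so that `Tr f(√H/Λ) = ∫_0^∞ Tr(e^{-sH/Λ²}) φ(s) ds`, then
`Tr f(√H/Λ) − (1/#Γ) Tr f(√H̃/Λ) = ∫_0^∞ R(s/Λ²) φ(s) ds = O(Λ^{-∞})` as `Λ → +∞`. -/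
theorem covering_spectral_action_comparison
    (TrH TrHt R : ℝ → ℂ) (Γcard : ℕ) (hΓ : 0 < Γcard)
    (hdec : ∀ t : ℝ, 0 < t → TrH t = (1 / (Γcard : ℂ)) * TrHt t + R t)
    (hR : ∀ n : ℕ, ∃ C : ℝ, 0 < C ∧ ∀ t : ℝ, 0 < t → ‖R t‖ ≤ C * t ^ n)
    (φ : SchwartzMap ℝ ℂ) (hφ0 : ∀ x : ℝ, x ≤ 0 → φ x = 0)
    (hint1 : ∀ Λ : ℝ, 0 < Λ →
      IntegrableOn (fun s => TrHt (s / Λ ^ 2) * φ s) (Set.Ioi (0 : ℝ)))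
    (hint2 : ∀ Λ : ℝ, 0 < Λ →
      IntegrableOn (fun s => R (s / Λ ^ 2) * φ s) (Set.Ioi (0 : ℝ))) :
    (∀ Λ : ℝ, 0 < Λ →
      (∫ s in Set.Ioi (0 : ℝ), TrH (s / Λ ^ 2) * φ s)
          - (1 / (Γcard : ℂ)) * ∫ s in Set.Ioi (0 : ℝ), TrHt (s / Λ ^ 2) * φ s
        = ∫ s in Set.Ioi (0 : ℝ), R (s / Λ ^ 2) * φ s)
    ∧ ∀ k : ℕ, ∃ C : ℝ, ∀ Λ : ℝ, 1 ≤ Λ →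
      ‖(∫ s in Set.Ioi (0 : ℝ), TrH (s / Λ ^ 2) * φ s)
          - (1 / (Γcard : ℂ)) * ∫ s in Set.Ioi (0 : ℝ), TrHt (s / Λ ^ 2) * φ s‖
        ≤ C / Λ ^ k := by
  have key : ∀ Λ : ℝ, 0 < Λ →
      (∫ s in Set.Ioi (0 : ℝ), TrH (s / Λ ^ 2) * φ s)
          - (1 / (Γcard : ℂ)) * ∫ s in Set.Ioi (0 : ℝ), TrHt (s / Λ ^ 2) * φ s
        = ∫ s in Set.Ioi (0 : ℝ), R (s / Λ ^ 2) * φ s := by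
    intro Λ hΛ
    have hΛ2 : (0 : ℝ) < Λ ^ 2 := by positivity
    have hcongr : ∫ s in Set.Ioi (0 : ℝ), TrH (s / Λ ^ 2) * φ s
        = ∫ s in Set.Ioi (0 : ℝ),
            ((1 / (Γcard : ℂ)) * (TrHt (s / Λ ^ 2) * φ s) + R (s / Λ ^ 2) * φ s) := by
      refine setIntegral_congr_fun measurableSet_Ioi ?_
      intro s hs
      have hspos : 0 < s / Λ ^ 2 := div_pos hs hΛ2
      simp only
      rw [hdec _ hspos]; ring
    rw [hcongr, integral_add ((hint1 Λ hΛ).const_mul _) (hint2 Λ hΛ),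
      integral_const_mul]
    ring
  refine ⟨key, ?_⟩
  intro k
  obtain ⟨C, hCpos, hC⟩ := hR k
  set I : ℝ := ∫ s in Set.Ioi (0 : ℝ), ‖s‖ ^ k * ‖φ s‖
  have hIint : Integrable (fun s : ℝ => ‖s‖ ^ k * ‖φ s‖)
      (volume.restrict (Set.Ioi (0 : ℝ))) :=
    (φ.integrable_pow_mul volume k).restrict
  refine ⟨C * I, ?_⟩
  intro Λ hΛ
  have hΛ0 : (0 : ℝ) < Λ := lt_of_lt_of_le one_pos hΛ
  have hΛ2 : (0 : ℝ) < Λ ^ 2 := by positivity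
  rw [key Λ hΛ0]
  have hbound : ‖∫ s in Set.Ioi (0 : ℝ), R (s / Λ ^ 2) * φ s‖
      ≤ ∫ s in Set.Ioi (0 : ℝ), (C / (Λ ^ 2) ^ k) * (‖s‖ ^ k * ‖φ s‖) := by
    refine norm_integral_le_of_norm_le (hIint.const_mul _) ?_
    filter_upwards [ae_restrict_mem measurableSet_Ioi] with s hs
    have hspos : 0 < s / Λ ^ 2 := div_pos hs hΛ2
    calc ‖R (s / Λ ^ 2) * φ s‖ = ‖R (s / Λ ^ 2)‖ * ‖φ s‖ := norm_mul _ _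
      _ ≤ C * (s / Λ ^ 2) ^ k * ‖φ s‖ := by
          exact mul_le_mul_of_nonneg_right (hC _ hspos) (norm_nonneg _)
      _ = (C / (Λ ^ 2) ^ k) * (‖s‖ ^ k * ‖φ s‖) := by
          rw [Real.norm_of_nonneg (le_of_lt hs), div_pow]; ring
  have hI0 : 0 ≤ I := integral_nonneg (fun s => by positivity)
  calc ‖∫ s in Set.Ioi (0 : ℝ), R (s / Λ ^ 2) * φ s‖
      ≤ ∫ s in Set.Ioi (0 : ℝ), (C / (Λ ^ 2) ^ k) * (‖s‖ ^ k * ‖φ s‖) := hbound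
    _ = (C / (Λ ^ 2) ^ k) * I := integral_const_mul _ _
    _ = (C * I) / (Λ ^ 2) ^ k := by ring
    _ ≤ (C * I) / Λ ^ k := by
        apply div_le_div_of_nonneg_left (by positivity) (by positivity)
        calc Λ ^ k ≤ (Λ ^ k) * (Λ ^ k) := le_mul_of_one_le_left (by positivity)
              (one_le_pow₀ hΛ)
          _ = (Λ ^ 2) ^ k := by ring
end
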